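/- arXiv:2507.12265 — 7 statements merged into one kernel-verified Lean document; each statement's English description precedes it below -/
import Mathlib

section
/- In a three-stage proportional one-rate symmetric Clos network, let Y be a feasible routing scheme, and suppose there are intermediate switch indices i0 and i1 and switch indices j0, k0 such that the link between T_{i0} and U_{j0} is not fully used (Σ_k Y i0 j0 k < C i0 j0) and the link between T_{i1} and V_{k0} is not fully used (Σ_j Y i1 j k0 < C i1 k0). Then there exists a feasible routing scheme Y' such that Y' i j k = Y i j k for every intermediate switch index i with i ≠ i0 and i ≠ i1, and such that for all j, k: Σ_i Y' i j k = Σ_i Y i j k + (1 if j = j0 and k = k0, else 0). That is, one additional connection between U_{j0} and V_{k0} can be scheduled by rearranging connections only within the two intermediate switches T_{i0} and T_{i1}. -/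
open Finset

namespace Stmt1Helper

lemma sum_ite_one {α : Type*} [Fintype α] [DecidableEq α] (u : α) :
    (∑ x : α, (if x = u then (1:ℕ) else 0)) = 1 := by simp

lemma sum_add_single {α : Type*} [Fintype α] [DecidableEq α] (f' f : α → ℕ) (u : α)
    (h : ∀ x, f' x = f x + (if x = u then 1 else 0)) :
    ∑ x, f' x = (∑ x, f x) + 1 := by
  calc ∑ x, f' x = ∑ x, (f x + (if x = u then 1 else 0)) :=
        Finset.sum_congr rfl (fun x _ => h x)
    _ = (∑ x, f x) + 1 := by rw [Finset.sum_add_distrib, sum_ite_one]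

lemma sum_sub_single {α : Type*} [Fintype α] [DecidableEq α] (f' f : α → ℕ) (u : α)
    (h : ∀ x, f' x + (if x = u then 1 else 0) = f x) :
    (∑ x, f' x) + 1 = ∑ x, f x := by
  calc (∑ x, f' x) + 1 = ∑ x, (f' x + (if x = u then 1 else 0)) := by
        rw [Finset.sum_add_distrib, sum_ite_one]
    _ = ∑ x, f x := Finset.sum_congr rfl (fun x _ => h x)

lemma sum_shift {α : Type*} [Fintype α] [DecidableEq α] (f' f : α → ℕ) (u v : α)
    (h : ∀ x, f' x + (if x = u then 1 else 0) = f x + (if x = v then 1 else 0)) :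
    ∑ x, f' x = ∑ x, f x := by
  have h1 : (∑ x, f' x) + 1 = (∑ x, f x) + 1 := by
    calc (∑ x, f' x) + 1 = ∑ x, (f' x + (if x = u then 1 else 0)) := by
          rw [Finset.sum_add_distrib, sum_ite_one]
      _ = ∑ x, (f x + (if x = v then 1 else 0)) := Finset.sum_congr rfl (fun x _ => h x)
      _ = (∑ x, f x) + 1 := by rw [Finset.sum_add_distrib, sum_ite_one]
  omega

variable {m : ℕ}

def rowS (X : Fin m → Fin m → ℕ) (j : Fin m) : ℕ := ∑ k, X j k
def colS (X : Fin m → Fin m → ℕ) (k : Fin m) : ℕ := ∑ j, X j k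

/-- Partial rearranged configuration with a one-unit "deficit" at column `cs r` of `A`. -/
def StateOK (A B : Fin m → Fin m → ℕ) (a b : ℕ) (w : Fin m → ℕ)
    (n : ℕ) (cs : ℕ → Fin m) (r : ℕ) : Prop :=
  ∃ A' B' : Fin m → Fin m → ℕ,
    (∀ j k, A' j k + B' j k = A j k + B j k) ∧
    (∀ j, rowS A' j ≤ rowS A j) ∧
    (∀ j, rowS B' j ≤ b * w j) ∧
    (colS A' (cs r) + 1 = colS A (cs r)) ∧
    (colS B' (cs r) = colS B (cs r) + 1) ∧
    (∀ k, k ≠ cs r → colS A' k ≤ a * w k) ∧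
    (∀ k, k ≠ cs r → colS B' k ≤ b * w k) ∧
    (∀ j k, (∀ s, r ≤ s → s ≤ n → cs s ≠ k) → A' j k = A j k ∧ B' j k = B j k) ∧
    (∀ j, B j (cs r) ≤ B' j (cs r))

lemma state_step (A B : Fin m → Fin m → ℕ) (a b : ℕ) (w : Fin m → ℕ)
    (hAc : ∀ k, colS A k ≤ a * w k) (hBc : ∀ k, colS B k ≤ b * w k)
    (n : ℕ) (cs js : ℕ → Fin m)
    (hdist : ∀ s s', s ≤ n → s' ≤ n → cs s = cs s' → s = s')
    (hedge : ∀ s, s < n → 0 < A (js (s+1)) (cs s) ∧ 0 < B (js (s+1)) (cs (s+1)))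
    (r : ℕ) (hrn : r + 1 ≤ n)
    (h : StateOK A B a b w n cs (r+1)) : StateOK A B a b w n cs r := by
  obtain ⟨A', B', hsum, hrowA, hrowB, hcA, hcB, hcolA, hcolB, hunt, hBge⟩ := h
  set jx := js (r+1) with hjx
  have hkuv : cs r ≠ cs (r+1) := by
    intro hh
    have := hdist r (r+1) (by omega) (by omega) hh
    omega
  -- entries in column (cs r) are untouched
  have huntr : ∀ j, A' j (cs r) = A j (cs r) ∧ B' j (cs r) = B j (cs r) := by
    intro j
    refine hunt j (cs r) ?_
    intro s hs1 hs2 hcs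
    have := hdist s r (by omega) (by omega) hcs
    omega
  have hA'pos : 0 < A' jx (cs r) := by
    rw [(huntr jx).1]; exact (hedge r (by omega)).1
  have hB'pos : 0 < B' jx (cs (r+1)) := lt_of_lt_of_le (hedge r (by omega)).2 (hBge jx)
  refine ⟨(fun j k => if j = jx ∧ k = cs r then A' j k - 1
            else if j = jx ∧ k = cs (r+1) then A' j k + 1 else A' j k),
          (fun j k => if j = jx ∧ k = cs r then B' j k + 1
            else if j = jx ∧ k = cs (r+1) then B' j k - 1 else B' j k),
          ?_, ?_, ?_, ?_, ?_, ?_, ?_, ?_, ?_⟩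
  · intro j k
    have := hsum j k
    dsimp only
    split_ifs with h1 h2 <;>
      [skip; skip; skip] <;>
      first
      | (obtain ⟨hj, hk⟩ := h1; subst hj; subst hk; have := hA'pos; omega)
      | (obtain ⟨hj, hk⟩ := h2; subst hj; subst hk; have := hB'pos; omega)
      | omega
  · intro j
    by_cases hj : j = jx
    · subst hj
      have heq : rowS (fun j k => if j = jx ∧ k = cs r then A' j k - 1
            else if j = jx ∧ k = cs (r+1) then A' j k + 1 else A' j k) jx = rowS A' jx := by
        apply sum_shift _ _ (cs r) (cs (r+1))
        intro x
        by_cases hx : x = cs r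
        · subst hx; simp [hkuv.symm, hkuv]; omega
        · by_cases hx2 : x = cs (r+1)
          · subst hx2; simp [hx, hkuv]
          · simp [hx, hx2]
      rw [heq]; exact hrowA jx
    · have heq : rowS (fun j k => if j = jx ∧ k = cs r then A' j k - 1
            else if j = jx ∧ k = cs (r+1) then A' j k + 1 else A' j k) j = rowS A' j := by
        apply Finset.sum_congr rfl; intro x _; simp [hj]
      rw [heq]; exact hrowA j
  · intro j
    by_cases hj : j = jx
    · subst hj
      have heq : rowS (fun j k => if j = jx ∧ k = cs r then B' j k + 1
            else if j = jx ∧ k = cs (r+1) then B' j k - 1 else B' j k) jx = rowS B' jx := by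
        apply sum_shift _ _ (cs (r+1)) (cs r)
        intro x
        by_cases hx : x = cs r
        · subst hx; simp [hkuv.symm, hkuv]
        · by_cases hx2 : x = cs (r+1)
          · subst hx2; simp [hx, hkuv]; omega
          · simp [hx, hx2]
      rw [heq]; exact hrowB jx
    · have heq : rowS (fun j k => if j = jx ∧ k = cs r then B' j k + 1
            else if j = jx ∧ k = cs (r+1) then B' j k - 1 else B' j k) j = rowS B' j := by
        apply Finset.sum_congr rfl; intro x _; simp [hj]
      rw [heq]; exact hrowB j
  · -- colS A'' (cs r) + 1 = colS A (cs r)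
    have hc1 : colS A' (cs r) = colS A (cs r) := by
      apply Finset.sum_congr rfl; intro j _; exact (huntr j).1
    have heq : colS (fun j k => if j = jx ∧ k = cs r then A' j k - 1
            else if j = jx ∧ k = cs (r+1) then A' j k + 1 else A' j k) (cs r) + 1
        = colS A' (cs r) := by
      apply sum_sub_single _ _ jx
      intro j
      by_cases hj : j = jx
      · subst hj; simp [hkuv]; omega
      · simp [hj]
    omega
  · -- colS B'' (cs r) = colS B (cs r) + 1
    have hc1 : colS B' (cs r) = colS B (cs r) := by
      apply Finset.sum_congr rfl; intro j _; exact (huntr j).2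
    have heq : colS (fun j k => if j = jx ∧ k = cs r then B' j k + 1
            else if j = jx ∧ k = cs (r+1) then B' j k - 1 else B' j k) (cs r)
        = colS B' (cs r) + 1 := by
      apply sum_add_single _ _ jx
      intro j
      by_cases hj : j = jx
      · subst hj; simp [hkuv]
      · simp [hj]
    omega
  · -- col bounds for A'' away from cs r
    intro k hk
    by_cases hk2 : k = cs (r+1)
    · subst hk2
      have heq : colS (fun j k => if j = jx ∧ k = cs r then A' j k - 1
            else if j = jx ∧ k = cs (r+1) then A' j k + 1 else A' j k) (cs (r+1))
          = colS A' (cs (r+1)) + 1 := by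
        apply sum_add_single _ _ jx
        intro j
        by_cases hj : j = jx
        · subst hj; simp [hkuv.symm]
        · simp [hj]
      rw [heq]
      have := hcA  -- colS A' (cs (r+1)) + 1 = colS A (cs (r+1))
      have := hAc (cs (r+1))
      omega
    · have heq : colS (fun j k => if j = jx ∧ k = cs r then A' j k - 1
            else if j = jx ∧ k = cs (r+1) then A' j k + 1 else A' j k) k
          = colS A' k := by
        apply Finset.sum_congr rfl; intro j _
        simp [fun (h : k = cs r) => hk h, fun (h : k = cs (r+1)) => hk2 h]
      rw [heq]; exact hcolA k hk2
  · -- col bounds for B'' away from cs r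
    intro k hk
    by_cases hk2 : k = cs (r+1)
    · subst hk2
      have heq : colS (fun j k => if j = jx ∧ k = cs r then B' j k + 1
            else if j = jx ∧ k = cs (r+1) then B' j k - 1 else B' j k) (cs (r+1)) + 1
          = colS B' (cs (r+1)) := by
        apply sum_sub_single _ _ jx
        intro j
        by_cases hj : j = jx
        · subst hj; simp [hkuv.symm]; omega
        · simp [hj]
      have := hBc (cs (r+1))
      omega
    · have heq : colS (fun j k => if j = jx ∧ k = cs r then B' j k + 1
            else if j = jx ∧ k = cs (r+1) then B' j k - 1 else B' j k) k
          = colS B' k := by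
        apply Finset.sum_congr rfl; intro j _
        simp [fun (h : k = cs r) => hk h, fun (h : k = cs (r+1)) => hk2 h]
      rw [heq]; exact hcolB k hk2
  · -- untouched columns
    intro j k hks
    have hk1 : k ≠ cs r := fun h => hks r (le_refl r) (by omega) h.symm
    have hk2 : k ≠ cs (r+1) := fun h => hks (r+1) (by omega) (by omega) h.symm
    have h3 := hunt j k (fun s hs1 hs2 => hks s (by omega) hs2)
    constructor
    · dsimp only
      rw [if_neg (by tauto), if_neg (by tauto)]
      exact h3.1
    · dsimp only
      rw [if_neg (by tauto), if_neg (by tauto)]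
      exact h3.2
  · -- B'' dominates B on column cs r
    intro j
    have := (huntr j).2
    by_cases hj : j = jx
    · subst hj; simp [hkuv]; omega
    · simp [hj]; omega

lemma state_base_row (A B : Fin m → Fin m → ℕ) (a b : ℕ) (w : Fin m → ℕ)
    (hAr : ∀ j, rowS A j ≤ a * w j)
    (hAc : ∀ k, colS A k ≤ a * w k) (hBc : ∀ k, colS B k ≤ b * w k)
    (hBr : ∀ j, rowS B j ≤ b * w j)
    (n : ℕ) (cs : ℕ → Fin m) (jx : Fin m)
    (hApos : 0 < A jx (cs n)) (hrB : rowS B jx < b * w jx) :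
    StateOK A B a b w n cs n := by
  refine ⟨(fun j k => if j = jx ∧ k = cs n then A j k - 1 else A j k),
          (fun j k => if j = jx ∧ k = cs n then B j k + 1 else B j k),
          ?_, ?_, ?_, ?_, ?_, ?_, ?_, ?_, ?_⟩
  · intro j k; dsimp only; split_ifs with h1
    · obtain ⟨hj, hk⟩ := h1; subst hj; subst hk; omega
    · rfl
  · intro j
    by_cases hj : j = jx
    · have heq : rowS (fun j' k => if j' = jx ∧ k = cs n then A j' k - 1 else A j' k) j + 1
          = rowS A j := by
        apply sum_sub_single _ _ (cs n)
        intro x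
        by_cases hx : x = cs n
        · subst hx; simp [hj]; omega
        · simp [hx]
      omega
    · have heq : rowS (fun j' k => if j' = jx ∧ k = cs n then A j' k - 1 else A j' k) j
          = rowS A j := by
        apply Finset.sum_congr rfl; intro x _; simp [hj]
      omega
  · intro j
    by_cases hj : j = jx
    · have heq : rowS (fun j' k => if j' = jx ∧ k = cs n then B j' k + 1 else B j' k) j
          = rowS B j + 1 := by
        apply sum_add_single _ _ (cs n)
        intro x
        by_cases hx : x = cs n
        · subst hx; simp [hj]
        · simp [hx]
      rw [heq, hj]; omega
    · have heq : rowS (fun j' k => if j' = jx ∧ k = cs n then B j' k + 1 else B j' k) j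
          = rowS B j := by
        apply Finset.sum_congr rfl; intro x _; simp [hj]
      rw [heq]; exact hBr j
  · apply sum_sub_single _ _ jx
    intro j
    by_cases hj : j = jx
    · subst hj; simp; omega
    · simp [hj]
  · apply sum_add_single _ _ jx
    intro j
    by_cases hj : j = jx
    · subst hj; simp
    · simp [hj]
  · intro k hk
    have heq : colS (fun j k => if j = jx ∧ k = cs n then A j k - 1 else A j k) k
        = colS A k := by
      apply Finset.sum_congr rfl; intro j _; simp [fun (h : k = cs n) => hk h]
    rw [heq]; exact hAc k
  · intro k hk
    have heq : colS (fun j k => if j = jx ∧ k = cs n then B j k + 1 else B j k) k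
        = colS B k := by
      apply Finset.sum_congr rfl; intro j _; simp [fun (h : k = cs n) => hk h]
    rw [heq]; exact hBc k
  · intro j k hks
    have hk1 : k ≠ cs n := fun h => hks n (le_refl n) (le_refl n) h.symm
    constructor <;> (dsimp only; rw [if_neg (by tauto)])
  · intro j
    by_cases hj : j = jx
    · subst hj; simp
    · simp [hj]

lemma state_base_col (A B : Fin m → Fin m → ℕ) (a b : ℕ) (w : Fin m → ℕ)
    (hAc : ∀ k, colS A k ≤ a * w k) (hBc : ∀ k, colS B k ≤ b * w k)
    (hBr : ∀ j, rowS B j ≤ b * w j)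
    (n : ℕ) (cs js : ℕ → Fin m) (hn : 1 ≤ n)
    (hdist : ∀ s s', s ≤ n → s' ≤ n → cs s = cs s' → s = s')
    (hedge : ∀ s, s < n → 0 < A (js (s+1)) (cs s) ∧ 0 < B (js (s+1)) (cs (s+1)))
    (hend : colS A (cs n) < a * w (cs n)) :
    StateOK A B a b w n cs (n-1) := by
  set jx := js n with hjx
  have hnn : n - 1 + 1 = n := by omega
  have hkuv : cs (n-1) ≠ cs n := by
    intro hh
    have := hdist (n-1) n (by omega) (le_refl n) hh
    omega
  have hApos : 0 < A jx (cs (n-1)) := by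
    have := (hedge (n-1) (by omega)).1
    rwa [hnn] at this
  have hBpos : 0 < B jx (cs n) := by
    have := (hedge (n-1) (by omega)).2
    rwa [hnn] at this
  refine ⟨(fun j k => if j = jx ∧ k = cs (n-1) then A j k - 1
            else if j = jx ∧ k = cs n then A j k + 1 else A j k),
          (fun j k => if j = jx ∧ k = cs (n-1) then B j k + 1
            else if j = jx ∧ k = cs n then B j k - 1 else B j k),
          ?_, ?_, ?_, ?_, ?_, ?_, ?_, ?_, ?_⟩
  · intro j k
    dsimp only
    split_ifs with h1 h2 <;>
      first
      | (obtain ⟨hj, hk⟩ := h1; subst hj; subst hk; have := hApos; omega)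
      | (obtain ⟨hj, hk⟩ := h2; subst hj; subst hk; have := hBpos; omega)
      | omega
  · intro j
    by_cases hj : j = jx
    · subst hj
      have heq : rowS (fun j k => if j = jx ∧ k = cs (n-1) then A j k - 1
            else if j = jx ∧ k = cs n then A j k + 1 else A j k) jx = rowS A jx := by
        apply sum_shift _ _ (cs (n-1)) (cs n)
        intro x
        by_cases hx : x = cs (n-1)
        · subst hx; simp [hkuv.symm, hkuv]; omega
        · by_cases hx2 : x = cs n
          · subst hx2; simp [hx, hkuv]
          · simp [hx, hx2]
      rw [heq]
    · have heq : rowS (fun j k => if j = jx ∧ k = cs (n-1) then A j k - 1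
            else if j = jx ∧ k = cs n then A j k + 1 else A j k) j = rowS A j := by
        apply Finset.sum_congr rfl; intro x _; simp [hj]
      rw [heq]
  · intro j
    by_cases hj : j = jx
    · subst hj
      have heq : rowS (fun j k => if j = jx ∧ k = cs (n-1) then B j k + 1
            else if j = jx ∧ k = cs n then B j k - 1 else B j k) jx = rowS B jx := by
        apply sum_shift _ _ (cs n) (cs (n-1))
        intro x
        by_cases hx : x = cs (n-1)
        · subst hx; simp [hkuv.symm, hkuv]
        · by_cases hx2 : x = cs n
          · subst hx2; simp [hx, hkuv]; omega
          · simp [hx, hx2]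
      rw [heq]; exact hBr jx
    · have heq : rowS (fun j k => if j = jx ∧ k = cs (n-1) then B j k + 1
            else if j = jx ∧ k = cs n then B j k - 1 else B j k) j = rowS B j := by
        apply Finset.sum_congr rfl; intro x _; simp [hj]
      rw [heq]; exact hBr j
  · apply sum_sub_single _ _ jx
    intro j
    by_cases hj : j = jx
    · subst hj; simp [hkuv]; omega
    · simp [hj]
  · apply sum_add_single _ _ jx
    intro j
    by_cases hj : j = jx
    · subst hj; simp [hkuv]
    · simp [hj]
  · intro k hk
    by_cases hk2 : k = cs n
    · subst hk2
      have heq : colS (fun j k => if j = jx ∧ k = cs (n-1) then A j k - 1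
            else if j = jx ∧ k = cs n then A j k + 1 else A j k) (cs n)
          = colS A (cs n) + 1 := by
        apply sum_add_single _ _ jx
        intro j
        by_cases hj : j = jx
        · subst hj; simp [hkuv.symm]
        · simp [hj]
      rw [heq]; omega
    · have heq : colS (fun j k => if j = jx ∧ k = cs (n-1) then A j k - 1
            else if j = jx ∧ k = cs n then A j k + 1 else A j k) k = colS A k := by
        apply Finset.sum_congr rfl; intro j _
        simp [fun (h : k = cs (n-1)) => hk h, fun (h : k = cs n) => hk2 h]
      rw [heq]; exact hAc k
  · intro k hk
    by_cases hk2 : k = cs n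
    · subst hk2
      have heq : colS (fun j k => if j = jx ∧ k = cs (n-1) then B j k + 1
            else if j = jx ∧ k = cs n then B j k - 1 else B j k) (cs n) + 1
          = colS B (cs n) := by
        apply sum_sub_single _ _ jx
        intro j
        by_cases hj : j = jx
        · subst hj; simp [hkuv.symm]; omega
        · simp [hj]
      have := hBc (cs n)
      omega
    · have heq : colS (fun j k => if j = jx ∧ k = cs (n-1) then B j k + 1
            else if j = jx ∧ k = cs n then B j k - 1 else B j k) k = colS B k := by
        apply Finset.sum_congr rfl; intro j _
        simp [fun (h : k = cs (n-1)) => hk h, fun (h : k = cs n) => hk2 h]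
      rw [heq]; exact hBc k
  · intro j k hks
    have hk1 : k ≠ cs (n-1) := fun h => hks (n-1) (le_refl _) (by omega) h.symm
    have hk2 : k ≠ cs n := fun h => hks n (by omega) (le_refl n) h.symm
    constructor <;> (dsimp only; rw [if_neg (by tauto), if_neg (by tauto)])
  · intro j
    by_cases hj : j = jx
    · subst hj; simp [hkuv]
    · simp [hj]

lemma state_descend (A B : Fin m → Fin m → ℕ) (a b : ℕ) (w : Fin m → ℕ)
    (hAc : ∀ k, colS A k ≤ a * w k) (hBc : ∀ k, colS B k ≤ b * w k)
    (n : ℕ) (cs js : ℕ → Fin m)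
    (hdist : ∀ s s', s ≤ n → s' ≤ n → cs s = cs s' → s = s')
    (hedge : ∀ s, s < n → 0 < A (js (s+1)) (cs s) ∧ 0 < B (js (s+1)) (cs (s+1)))
    (r : ℕ) (hr : r ≤ n) (h : StateOK A B a b w n cs r) :
    StateOK A B a b w n cs 0 := by
  induction r with
  | zero => exact h
  | succ r ih =>
    exact ih (by omega) (state_step A B a b w hAc hBc n cs js hdist hedge r hr h)

lemma state_final (A B : Fin m → Fin m → ℕ) (a b : ℕ) (w : Fin m → ℕ)
    (hAr : ∀ j, rowS A j ≤ a * w j)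
    (hAc : ∀ k, colS A k ≤ a * w k) (hBc : ∀ k, colS B k ≤ b * w k)
    (n : ℕ) (cs : ℕ → Fin m)
    (hk0 : colS B (cs 0) < b * w (cs 0))
    (h : StateOK A B a b w n cs 0) :
    ∃ A' B' : Fin m → Fin m → ℕ,
      (∀ j, rowS A' j ≤ a * w j) ∧ (∀ k, colS A' k ≤ a * w k) ∧
      (∀ j, rowS B' j ≤ b * w j) ∧ (∀ k, colS B' k ≤ b * w k) ∧
      (∀ j k, A' j k + B' j k = A j k + B j k) ∧
      (∀ j, rowS A' j ≤ rowS A j) ∧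
      colS A' (cs 0) < a * w (cs 0) := by
  obtain ⟨A', B', hsum, hrowA, hrowB, hcA, hcB, hcolA, hcolB, hunt, hBge⟩ := h
  refine ⟨A', B', fun j => le_trans (hrowA j) (hAr j), ?_, hrowB, ?_, hsum, hrowA, ?_⟩
  · intro k
    by_cases hk : k = cs 0
    · subst hk; have := hAc (cs 0); omega
    · exact hcolA k hk
  · intro k
    by_cases hk : k = cs 0
    · subst hk; omega
    · exact hcolB k hk
  · have := hAc (cs 0); omega

def Goal (A B : Fin m → Fin m → ℕ) (a b : ℕ) (w : Fin m → ℕ) (k0 : Fin m) : Prop :=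
  ∃ A' B' : Fin m → Fin m → ℕ,
    (∀ j, rowS A' j ≤ a * w j) ∧ (∀ k, colS A' k ≤ a * w k) ∧
    (∀ j, rowS B' j ≤ b * w j) ∧ (∀ k, colS B' k ≤ b * w k) ∧
    (∀ j k, A' j k + B' j k = A j k + B j k) ∧
    (∀ j, rowS A' j ≤ rowS A j) ∧
    colS A' k0 < a * w k0

def ChainSpec (A B : Fin m → Fin m → ℕ) (k0 : Fin m) (n : ℕ) (cs js : ℕ → Fin m) : Prop :=
  cs 0 = k0 ∧ ∀ s, s < n → 0 < A (js (s+1)) (cs s) ∧ 0 < B (js (s+1)) (cs (s+1))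

def GoodEnd (A B : Fin m → Fin m → ℕ) (a b : ℕ) (w : Fin m → ℕ)
    (n : ℕ) (cs : ℕ → Fin m) : Prop :=
  colS A (cs n) < a * w (cs n) ∨ ∃ j', 0 < A j' (cs n) ∧ rowS B j' < b * w j'

lemma chain_good (A B : Fin m → Fin m → ℕ) (a b : ℕ) (w : Fin m → ℕ) (k0 : Fin m)
    (hAr : ∀ j, rowS A j ≤ a * w j) (hAc : ∀ k, colS A k ≤ a * w k)
    (hBr : ∀ j, rowS B j ≤ b * w j) (hBc : ∀ k, colS B k ≤ b * w k)
    (hk0 : colS B k0 < b * w k0)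
    (hG : ¬ Goal A B a b w k0) :
    ∀ n (cs js : ℕ → Fin m), ChainSpec A B k0 n cs js → GoodEnd A B a b w n cs → False := by
  intro n
  induction n using Nat.strong_induction_on with
  | _ n ih =>
  intro cs js hspec hgood
  by_cases hdup : ∃ s s', s < s' ∧ s' ≤ n ∧ cs s = cs s'
  · obtain ⟨s, s', hss, hs'n, hcseq⟩ := hdup
    set d := s' - s with hd
    set n2 := n - d with hn2def
    have hn2lt : n2 < n := by omega
    set cs2 : ℕ → Fin m := fun i => if i ≤ s then cs i else cs (i + d) with hcs2
    set js2 : ℕ → Fin m := fun i => if i ≤ s then js i else js (i + d) with hjs2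
    have hcs2n : cs2 n2 = cs n := by
      by_cases h : n2 ≤ s
      · have hn2s : n2 = s := by omega
        have hs'eq : s' = n := by omega
        simp only [hcs2]
        rw [if_pos h, hn2s, hcseq, hs'eq]
      · simp only [hcs2]
        rw [if_neg h]
        congr 1
        omega
    apply ih n2 hn2lt cs2 js2
    · constructor
      · simp only [hcs2]
        rw [if_pos (Nat.zero_le s)]
        exact hspec.1
      · intro i hi
        rcases Nat.lt_or_ge i s with h1 | h1
        · simp only [hcs2, hjs2]
          rw [if_pos (by omega : i ≤ s), if_pos (by omega : i + 1 ≤ s),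
            if_pos (by omega : i + 1 ≤ s)]
          exact hspec.2 i (by omega)
        · rcases Nat.eq_or_lt_of_le h1 with h2 | h2
          · -- i = s
            have hs'ltn : s' < n := by omega
            have harith : i + 1 + d = s' + 1 := by omega
            simp only [hcs2, hjs2]
            rw [if_neg (by omega : ¬ i + 1 ≤ s), if_neg (by omega : ¬ i + 1 ≤ s),
              if_pos (by omega : i ≤ s), harith, ← h2, hcseq]
            exact hspec.2 s' hs'ltn
          · -- i > s
            have harith : i + 1 + d = (i + d) + 1 := by omega
            simp only [hcs2, hjs2]
            rw [if_neg (by omega : ¬ i + 1 ≤ s), if_neg (by omega : ¬ i + 1 ≤ s),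
              if_neg (by omega : ¬ i ≤ s), harith]
            exact hspec.2 (i + d) (by omega)
    · rcases hgood with h | h
      · left; rwa [hcs2n]
      · right; rwa [hcs2n]
  · have hdist : ∀ s s', s ≤ n → s' ≤ n → cs s = cs s' → s = s' := by
      push_neg at hdup
      intro s s' hs hs' heq
      by_contra hne
      rcases Nat.lt_or_ge s s' with h | h
      · exact hdup s s' h hs' heq
      · have h2 : s' < s := by omega
        exact hdup s' s h2 hs heq.symm
    have hk0' : colS B (cs 0) < b * w (cs 0) := by rw [hspec.1]; exact hk0
    rcases hgood with hcol | ⟨j', hj'A, hj'B⟩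
    · rcases Nat.eq_zero_or_pos n with hn0 | hn
      · apply hG
        subst hn0
        rw [hspec.1] at hcol
        exact ⟨A, B, hAr, hAc, hBr, hBc, fun j k => rfl, fun j => le_refl _, hcol⟩
      · apply hG
        have hbase := state_base_col A B a b w hAc hBc hBr n cs js hn hdist hspec.2 hcol
        have h0 := state_descend A B a b w hAc hBc n cs js hdist hspec.2 (n-1) (by omega) hbase
        have hfin := state_final A B a b w hAr hAc hBc n cs hk0' h0
        rw [hspec.1] at hfin
        exact hfin
    · apply hG
      have hbase := state_base_row A B a b w hAr hAc hBc hBr n cs j' hj'A hj'B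
      have h0 := state_descend A B a b w hAc hBc n cs js hdist hspec.2 n (le_refl n) hbase
      have hfin := state_final A B a b w hAr hAc hBc n cs hk0' h0
      rw [hspec.1] at hfin
      exact hfin

lemma core (A B : Fin m → Fin m → ℕ) (a b : ℕ) (w : Fin m → ℕ) (k0 : Fin m)
    (hAr : ∀ j, rowS A j ≤ a * w j) (hAc : ∀ k, colS A k ≤ a * w k)
    (hBr : ∀ j, rowS B j ≤ b * w j) (hBc : ∀ k, colS B k ≤ b * w k)
    (ha : 0 < a)
    (hk0 : colS B k0 < b * w k0) : Goal A B a b w k0 := by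
  classical
  by_contra hG
  have hchain := chain_good A B a b w k0 hAr hAc hBr hBc hk0 hG
  set S : Finset (Fin m) :=
    Finset.univ.filter (fun k => ∃ n cs js, ChainSpec A B k0 n cs js ∧ cs n = k) with hS
  set R : Finset (Fin m) := Finset.univ.filter (fun j => ∃ k ∈ S, 0 < A j k) with hR
  have hk0S : k0 ∈ S := by
    simp only [hS, Finset.mem_filter]
    exact ⟨Finset.mem_univ _, 0, (fun _ => k0), (fun _ => k0),
      ⟨rfl, fun s hs => absurd hs (Nat.not_lt_zero s)⟩, rfl⟩
  have hF1 : ∀ k ∈ S, colS A k = a * w k := by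
    intro k hk
    simp only [hS, Finset.mem_filter] at hk
    obtain ⟨-, n, cs, js, hspec, hcsn⟩ := hk
    by_contra hne
    have hlt : colS A k < a * w k := lt_of_le_of_ne (hAc k) hne
    exact hchain n cs js hspec (Or.inl (by rw [hcsn]; exact hlt))
  have hF2 : ∀ j ∈ R, rowS B j = b * w j := by
    intro j hj
    simp only [hR, Finset.mem_filter] at hj
    obtain ⟨-, k, hkS, hjk⟩ := hj
    simp only [hS, Finset.mem_filter] at hkS
    obtain ⟨-, n, cs, js, hspec, hcsn⟩ := hkS
    by_contra hne
    have hlt : rowS B j < b * w j := lt_of_le_of_ne (hBr j) hne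
    exact hchain n cs js hspec (Or.inr ⟨j, by rw [hcsn]; exact hjk, hlt⟩)
  have hF3 : ∀ j ∈ R, ∀ k, 0 < B j k → k ∈ S := by
    intro j hj k hjk
    simp only [hR, Finset.mem_filter] at hj
    obtain ⟨-, k', hk'S, hjk'⟩ := hj
    simp only [hS, Finset.mem_filter] at hk'S
    obtain ⟨-, n, cs, js, hspec, hcsn⟩ := hk'S
    simp only [hS, Finset.mem_filter]
    refine ⟨Finset.mem_univ _, n+1, (fun i => if i ≤ n then cs i else k),
      (fun i => if i ≤ n then js i else j), ⟨?_, ?_⟩, ?_⟩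
    · simp only []
      rw [if_pos (Nat.zero_le n)]
      exact hspec.1
    · intro i hi
      rcases Nat.lt_or_ge i n with h1 | h1
      · simp only []
        rw [if_pos (by omega : i + 1 ≤ n), if_pos (by omega : i ≤ n),
          if_pos (by omega : i + 1 ≤ n)]
        exact hspec.2 i h1
      · have hieq : i = n := by omega
        simp only []
        rw [if_neg (by omega : ¬ i + 1 ≤ n), if_neg (by omega : ¬ i + 1 ≤ n),
          if_pos (by omega : i ≤ n), hieq, hcsn]
        exact ⟨hjk', hjk⟩
    · simp only []
      rw [if_neg (by omega : ¬ n + 1 ≤ n)]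
  have hF4 : ∀ k ∈ S, ∀ j, 0 < A j k → j ∈ R := by
    intro k hk j hjk
    simp only [hR, Finset.mem_filter]
    exact ⟨Finset.mem_univ _, k, hk, hjk⟩
  have count1 : a * ∑ k ∈ S, w k ≤ a * ∑ j ∈ R, w j := by
    calc a * ∑ k ∈ S, w k = ∑ k ∈ S, a * w k := Finset.mul_sum _ _ _
      _ = ∑ k ∈ S, colS A k := Finset.sum_congr rfl (fun k hk => (hF1 k hk).symm)
      _ = ∑ k ∈ S, ∑ j ∈ R, A j k := by
          apply Finset.sum_congr rfl
          intro k hk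
          refine (Finset.sum_subset (Finset.subset_univ R) ?_).symm
          intro j _ hjR
          by_contra hne
          exact hjR (hF4 k hk j (Nat.pos_of_ne_zero hne))
      _ = ∑ j ∈ R, ∑ k ∈ S, A j k := Finset.sum_comm
      _ ≤ ∑ j ∈ R, rowS A j :=
          Finset.sum_le_sum (fun j _ =>
            Finset.sum_le_sum_of_subset (Finset.subset_univ S))
      _ ≤ ∑ j ∈ R, a * w j := Finset.sum_le_sum (fun j _ => hAr j)
      _ = a * ∑ j ∈ R, w j := (Finset.mul_sum _ _ _).symm
  have count2 : b * ∑ j ∈ R, w j < b * ∑ k ∈ S, w k := by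
    calc b * ∑ j ∈ R, w j = ∑ j ∈ R, b * w j := Finset.mul_sum _ _ _
      _ = ∑ j ∈ R, rowS B j := Finset.sum_congr rfl (fun j hj => (hF2 j hj).symm)
      _ = ∑ j ∈ R, ∑ k ∈ S, B j k := by
          apply Finset.sum_congr rfl
          intro j hj
          refine (Finset.sum_subset (Finset.subset_univ S) ?_).symm
          intro k _ hkS
          by_contra hne
          exact hkS (hF3 j hj k (Nat.pos_of_ne_zero hne))
      _ = ∑ k ∈ S, ∑ j ∈ R, B j k := Finset.sum_comm
      _ ≤ ∑ k ∈ S, colS B k :=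
          Finset.sum_le_sum (fun k _ =>
            Finset.sum_le_sum_of_subset (Finset.subset_univ R))
      _ < ∑ k ∈ S, b * w k := Finset.sum_lt_sum (fun k _ => hBc k) ⟨k0, hk0S, hk0⟩
      _ = b * ∑ k ∈ S, w k := (Finset.mul_sum _ _ _).symm
  have h1 : ∑ k ∈ S, w k ≤ ∑ j ∈ R, w j := Nat.le_of_mul_le_mul_left count1 ha
  have h2 : ∑ j ∈ R, w j < ∑ k ∈ S, w k := Nat.lt_of_mul_lt_mul_left count2
  omega

lemma twoSwitch (A B : Fin m → Fin m → ℕ) (a b : ℕ) (w : Fin m → ℕ) (j0 k0 : Fin m)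
    (hAr : ∀ j, rowS A j ≤ a * w j) (hAc : ∀ k, colS A k ≤ a * w k)
    (hBr : ∀ j, rowS B j ≤ b * w j) (hBc : ∀ k, colS B k ≤ b * w k)
    (h0 : rowS A j0 < a * w j0) (hk0 : colS B k0 < b * w k0) :
    ∃ A' B' : Fin m → Fin m → ℕ,
      (∀ j, rowS A' j ≤ a * w j) ∧ (∀ k, colS A' k ≤ a * w k) ∧
      (∀ j, rowS B' j ≤ b * w j) ∧ (∀ k, colS B' k ≤ b * w k) ∧
      (∀ j k, A' j k + B' j k = A j k + B j k + (if j = j0 ∧ k = k0 then 1 else 0)) := by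
  have ha : 0 < a := by
    by_contra h
    have ha0 : a = 0 := by omega
    rw [ha0, Nat.zero_mul] at h0
    omega
  obtain ⟨A1, B1, h1r, h1c, h2r, h2c, hsum, hrle, hcol⟩ :=
    core A B a b w k0 hAr hAc hBr hBc ha hk0
  refine ⟨(fun j k => if j = j0 ∧ k = k0 then A1 j k + 1 else A1 j k), B1, ?_, ?_, h2r, h2c, ?_⟩
  · intro j
    by_cases hj : j = j0
    · have heq : rowS (fun j' k => if j' = j0 ∧ k = k0 then A1 j' k + 1 else A1 j' k) j
          = rowS A1 j + 1 := by
        apply sum_add_single _ _ k0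
        intro x
        by_cases hx : x = k0
        · subst hx; simp [hj]
        · simp [hx]
      have := hrle j
      rw [heq, hj] at *
      omega
    · have heq : rowS (fun j' k => if j' = j0 ∧ k = k0 then A1 j' k + 1 else A1 j' k) j
          = rowS A1 j := by
        apply Finset.sum_congr rfl; intro x _; simp [hj]
      rw [heq]; exact h1r j
  · intro k
    by_cases hk : k = k0
    · have heq : colS (fun j k' => if j = j0 ∧ k' = k0 then A1 j k' + 1 else A1 j k') k
          = colS A1 k + 1 := by
        apply sum_add_single _ _ j0
        intro x
        by_cases hx : x = j0
        · subst hx; simp [hk]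
        · simp [hx]
      rw [heq, hk]
      omega
    · have heq : colS (fun j k' => if j = j0 ∧ k' = k0 then A1 j k' + 1 else A1 j k') k
          = colS A1 k := by
        apply Finset.sum_congr rfl; intro x _; simp [hk]
      rw [heq]; exact h1c k
  · intro j k
    have := hsum j k
    dsimp only
    split_ifs with h1
    · omega
    · omega

lemma sum_one_split {N : ℕ} (i0 : Fin N) (f g : Fin N → ℕ) (c : ℕ)
    (h0 : f i0 = g i0 + c) (hoff : ∀ i, i ≠ i0 → f i = g i) :
    ∑ i, f i = (∑ i, g i) + c := by
  classical
  have e1 : f i0 + ∑ i ∈ Finset.univ.erase i0, f i = ∑ i, f i :=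
    Finset.add_sum_erase _ f (Finset.mem_univ i0)
  have e2 : g i0 + ∑ i ∈ Finset.univ.erase i0, g i = ∑ i, g i :=
    Finset.add_sum_erase _ g (Finset.mem_univ i0)
  have e3 : ∑ i ∈ Finset.univ.erase i0, f i = ∑ i ∈ Finset.univ.erase i0, g i := by
    apply Finset.sum_congr rfl
    intro i hi
    exact hoff i (Finset.mem_erase.mp hi).1
  omega

lemma sum_two_split {N : ℕ} (i0 i1 : Fin N) (hne : i0 ≠ i1) (f g : Fin N → ℕ) (c : ℕ)
    (h01 : f i0 + f i1 = g i0 + g i1 + c)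
    (hoff : ∀ i, i ≠ i0 → i ≠ i1 → f i = g i) :
    ∑ i, f i = (∑ i, g i) + c := by
  classical
  have hi1 : i1 ∈ Finset.univ.erase i0 :=
    Finset.mem_erase.mpr ⟨hne.symm, Finset.mem_univ _⟩
  have e1 : f i0 + ∑ i ∈ Finset.univ.erase i0, f i = ∑ i, f i :=
    Finset.add_sum_erase _ f (Finset.mem_univ i0)
  have e2 : g i0 + ∑ i ∈ Finset.univ.erase i0, g i = ∑ i, g i :=
    Finset.add_sum_erase _ g (Finset.mem_univ i0)
  have e3 : f i1 + ∑ i ∈ (Finset.univ.erase i0).erase i1, f i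
      = ∑ i ∈ Finset.univ.erase i0, f i := Finset.add_sum_erase _ f hi1
  have e4 : g i1 + ∑ i ∈ (Finset.univ.erase i0).erase i1, g i
      = ∑ i ∈ Finset.univ.erase i0, g i := Finset.add_sum_erase _ g hi1
  have e5 : ∑ i ∈ (Finset.univ.erase i0).erase i1, f i
      = ∑ i ∈ (Finset.univ.erase i0).erase i1, g i := by
    apply Finset.sum_congr rfl
    intro i hi
    have h1 := (Finset.mem_erase.mp hi).1
    have h2 := (Finset.mem_erase.mp (Finset.mem_erase.mp hi).2).1
    exact hoff i h2 h1
  omega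

end Stmt1Helper

/-- In a three-stage proportional one-rate symmetric Clos network, if the
link `(T i0, U j0)` and the link `(T i1, V k0)` are not fully used, then one additional
connection between `U j0` and `V k0` can be scheduled while rearranging connections only
within the two intermediate switches `T i0` and `T i1`. -/
theorem stmt_1 (m n : ℕ) (C : Fin n → Fin m → ℕ)
    (WT : Fin n → ℕ) (WL : Fin m → ℕ)
    (hprop : ∀ i j, C i j = WT i * WL j)
    (Y : Fin n → Fin m → Fin m → ℕ)
    (hfeasU : ∀ i j, ∑ k, Y i j k ≤ C i j)
    (hfeasV : ∀ i k, ∑ j, Y i j k ≤ C i k)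
    (i0 i1 : Fin n) (j0 k0 : Fin m)
    (h0 : ∑ k, Y i0 j0 k < C i0 j0)
    (h1 : ∑ j, Y i1 j k0 < C i1 k0) :
    ∃ Y' : Fin n → Fin m → Fin m → ℕ,
      (∀ i j, ∑ k, Y' i j k ≤ C i j) ∧
      (∀ i k, ∑ j, Y' i j k ≤ C i k) ∧
      (∀ i, i ≠ i0 → i ≠ i1 → ∀ j k, Y' i j k = Y i j k) ∧
      (∀ j k, ∑ i, Y' i j k = ∑ i, Y i j k + (if j = j0 ∧ k = k0 then 1 else 0)) := by
  by_cases hii : i0 = i1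
  · subst hii
    refine ⟨fun i j k => if i = i0 ∧ j = j0 ∧ k = k0 then Y i j k + 1 else Y i j k,
      ?_, ?_, ?_, ?_⟩
    · intro i j
      by_cases hi : i = i0 ∧ j = j0
      · obtain ⟨hi1, hj1⟩ := hi
        have heq : (∑ k, if i = i0 ∧ j = j0 ∧ k = k0 then Y i j k + 1 else Y i j k)
            = (∑ k, Y i j k) + 1 := by
          apply Stmt1Helper.sum_add_single _ _ k0
          intro x
          by_cases hx : x = k0
          · subst hx; simp [hi1, hj1]
          · simp [hx]
        rw [heq, hi1, hj1]
        omega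
      · have heq : (∑ k, if i = i0 ∧ j = j0 ∧ k = k0 then Y i j k + 1 else Y i j k)
            = ∑ k, Y i j k :=
          Finset.sum_congr rfl (fun x _ => by rw [if_neg (by tauto)])
        rw [heq]; exact hfeasU i j
    · intro i k
      by_cases hi : i = i0 ∧ k = k0
      · obtain ⟨hi1, hk1⟩ := hi
        have heq : (∑ j, if i = i0 ∧ j = j0 ∧ k = k0 then Y i j k + 1 else Y i j k)
            = (∑ j, Y i j k) + 1 := by
          apply Stmt1Helper.sum_add_single _ _ j0
          intro x
          by_cases hx : x = j0
          · subst hx; simp [hi1, hk1]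
          · simp [hx]
        rw [heq, hi1, hk1]
        omega
      · have heq : (∑ j, if i = i0 ∧ j = j0 ∧ k = k0 then Y i j k + 1 else Y i j k)
            = ∑ j, Y i j k :=
          Finset.sum_congr rfl (fun x _ => by rw [if_neg (by tauto)])
        rw [heq]; exact hfeasV i k
    · intro i hi _ j k
      dsimp only
      rw [if_neg (by tauto)]
    · intro j k
      by_cases hjk : j = j0 ∧ k = k0
      · rw [if_pos hjk]
        apply Stmt1Helper.sum_one_split i0 _ _ 1
        · dsimp only
          rw [if_pos ⟨rfl, hjk.1, hjk.2⟩]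
        · intro i hi
          dsimp only
          rw [if_neg (by tauto)]
      · rw [if_neg hjk, Nat.add_zero]
        exact Finset.sum_congr rfl (fun i _ => by dsimp only; rw [if_neg (by tauto)])
  · have hAr : ∀ j, Stmt1Helper.rowS (Y i0) j ≤ WT i0 * WL j := fun j => by
      have h := hfeasU i0 j; rwa [hprop i0 j] at h
    have hAc : ∀ k, Stmt1Helper.colS (Y i0) k ≤ WT i0 * WL k := fun k => by
      have h := hfeasV i0 k; rwa [hprop i0 k] at h
    have hBr : ∀ j, Stmt1Helper.rowS (Y i1) j ≤ WT i1 * WL j := fun j => by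
      have h := hfeasU i1 j; rwa [hprop i1 j] at h
    have hBc : ∀ k, Stmt1Helper.colS (Y i1) k ≤ WT i1 * WL k := fun k => by
      have h := hfeasV i1 k; rwa [hprop i1 k] at h
    have h0' : Stmt1Helper.rowS (Y i0) j0 < WT i0 * WL j0 := by
      have h := h0; rwa [hprop i0 j0] at h
    have hk0' : Stmt1Helper.colS (Y i1) k0 < WT i1 * WL k0 := by
      have h := h1; rwa [hprop i1 k0] at h
    obtain ⟨A', B', hA'r, hA'c, hB'r, hB'c, hsum⟩ :=
      Stmt1Helper.twoSwitch (Y i0) (Y i1) (WT i0) (WT i1) WL j0 k0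
        hAr hAc hBr hBc h0' hk0'
    refine ⟨fun i => if i = i0 then A' else if i = i1 then B' else Y i, ?_, ?_, ?_, ?_⟩
    · intro i j
      by_cases hi : i = i0
      · subst hi
        simp only [if_pos rfl]
        rw [hprop i j]
        exact hA'r j
      · by_cases hi1 : i = i1
        · subst hi1
          dsimp only
          rw [if_neg hi, if_pos rfl, hprop i j]
          exact hB'r j
        · dsimp only
          rw [if_neg hi, if_neg hi1]
          exact hfeasU i j
    · intro i k
      by_cases hi : i = i0
      · subst hi
        simp only [if_pos rfl]
        rw [hprop i k]
        exact hA'c k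
      · by_cases hi1 : i = i1
        · subst hi1
          dsimp only
          rw [if_neg hi, if_pos rfl, hprop i k]
          exact hB'c k
        · dsimp only
          rw [if_neg hi, if_neg hi1]
          exact hfeasV i k
    · intro i hi hi1 j k
      dsimp only
      rw [if_neg hi, if_neg hi1]
    · intro j k
      apply Stmt1Helper.sum_two_split i0 i1 hii
      · have e0 : (if i0 = i0 then A' else if i0 = i1 then B' else Y i0) = A' := if_pos rfl
        have e1 : (if i1 = i0 then A' else if i1 = i1 then B' else Y i1) = B' := by
          rw [if_neg (fun h => hii h.symm), if_pos rfl]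
        dsimp only
        rw [e0, e1]
        exact hsum j k
      · intro i hi hi1
        dsimp only
        rw [if_neg hi, if_neg hi1]
end

section
/- In a two-level proportional one-rate bidirectional Clos network, a demand D is feasible — i.e., there exists a feasible routing scheme Y with E(Y) j k ≥ D j k for all j, k — if and only if for every low-level switch index j, Σ_k D j k ≤ Σ_i C i j (the total demand at each low-level switch does not exceed its total link capacity). In particular, proportional one-rate bidirectional Clos networks achieve the theoretical maximum throughput. -/
/-!
Necessity is double counting. For sufficiency put `W = ∑ i, WT i`, so that the hypothesis reads
`deg j ≤ 2 * W * WL j`. Orient the demand multigraph so that in- and out-degrees differ by at most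
one at every vertex (split off double edges and shortcut paths `j - k - l` by an edge `j - l`
until all degrees are at most one, then undo these steps); each in- and out-degree is then at most
`W * WL j`. Splitting `L_j` into `WL j` copies turns the arcs into a bipartite multigraph of
maximum degree `W`, which by König's theorem is a union of `W` matchings. Folding the copies back,
each matching becomes a digraph `G` with in- and out-degrees at most `WL j`, so `G + Gᵀ` uses at
most `2 * WL j` of the capacity at `L_j`; the switch `T_i` carries `WT i` of these.
-/

open Finset

section Transportation

variable {α β : Type*} [Fintype α] [Fintype β]

theorem exists_le_sum_eq [DecidableEq α] (a : α → ℕ) {e : ℕ} (he : e ≤ ∑ x, a x) :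
    ∃ b ≤ a, ∑ x, b x = e := by
  induction e with
  | zero => exact ⟨0, fun _ => Nat.zero_le _, by simp⟩
  | succ e ih =>
    obtain ⟨b, hba, hb⟩ := ih (by omega)
    obtain ⟨x, hx⟩ : ∃ x, b x < a x := by
      by_contra! h
      have := sum_le_sum fun x (_ : x ∈ univ) => h x
      omega
    refine ⟨b + Pi.single x 1, fun y => ?_, by simp [sum_add_distrib, hb]⟩
    rcases eq_or_ne y x with rfl | hy
    · simpa using hx
    · simpa [hy] using hba y

theorem exists_matrix_with_margins [DecidableEq α] [DecidableEq β] (u : α → ℕ) (v : β → ℕ)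
    (h : ∑ i, u i = ∑ j, v j) :
    ∃ M : α → β → ℕ, (∀ i, ∑ j, M i j = u i) ∧ ∀ j, ∑ i, M i j = v j := by
  suffices ∀ (s : Finset α) (v : β → ℕ), ∑ i ∈ s, u i = ∑ j, v j →
      ∃ M : α → β → ℕ, (∀ i ∈ s, ∑ j, M i j = u i) ∧ ∀ j, ∑ i ∈ s, M i j = v j by
    simpa using this univ v h
  intro s
  induction s using Finset.induction_on with
  | empty =>
    refine fun v hv => ⟨0, by simp, fun j => ?_⟩
    simpa using (sum_eq_zero_iff.mp hv.symm j (mem_univ j)).symm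
  | insert a s ha ih =>
    intro v hv
    rw [sum_insert ha] at hv
    obtain ⟨b, hbv, hb⟩ := exists_le_sum_eq v (e := u a) (by omega)
    obtain ⟨M, hMrow, hMcol⟩ := ih (v - b) (by
      simp only [Pi.sub_apply]
      rw [sum_tsub_distrib _ fun j _ => hbv j]
      omega)
    refine ⟨Function.update M a b, fun i hi => ?_, fun j => ?_⟩
    · rcases mem_insert.mp hi with rfl | hi
      · simpa using hb
      · simpa [ne_of_mem_of_not_mem hi ha] using hMrow i hi
    · rw [sum_insert ha, Function.update_self,
        sum_congr rfl fun i hi => by rw [Function.update_of_ne (ne_of_mem_of_not_mem hi ha)],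
        hMcol j, Pi.sub_apply]
      have : b j ≤ v j := hbv j
      omega

theorem exists_matrix_row_sums_col_le [DecidableEq α] [DecidableEq β] (g : α → ℕ) {W : ℕ}
    (hg : ∑ i, g i ≤ Fintype.card β * W) :
    ∃ M : α → β → ℕ, (∀ i, ∑ j, M i j = g i) ∧ ∀ j, ∑ i, M i j ≤ W := by
  obtain ⟨v, hvW, hv⟩ := exists_le_sum_eq (fun _ : β => W) (e := ∑ i, g i) (by simpa using hg)
  obtain ⟨M, hrow, hcol⟩ := exists_matrix_with_margins g v hv.symm
  exact ⟨M, hrow, fun j => (hcol j).trans_le (hvW j)⟩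

end Transportation

section Matchings

variable {α : Type*} [Fintype α] [DecidableEq α]

lemma sum_ite_perm_apply_eq (π : Equiv.Perm α) (c : α) :
    ∑ r, (if π r = c then 1 else 0 : ℕ) = 1 := by
  rw [Equiv.sum_comp π (fun c' => if c' = c then 1 else 0)]
  simp

theorem exists_regular_ge {M : α → α → ℕ} {W : ℕ} (hrow : ∀ r, ∑ c, M r c ≤ W)
    (hcol : ∀ c, ∑ r, M r c ≤ W) :
    ∃ N, M ≤ N ∧ (∀ r, ∑ c, N r c = W) ∧ ∀ c, ∑ r, N r c = W := by
  obtain ⟨S, hSrow, hScol⟩ := exists_matrix_with_margins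
    (fun r => W - ∑ c, M r c) (fun c => W - ∑ r, M r c) (by
      rw [sum_tsub_distrib _ fun r _ => hrow r, sum_tsub_distrib _ fun c _ => hcol c, sum_comm])
  refine ⟨M + S, fun r c => Nat.le_add_right _ _, fun r => ?_, fun c => ?_⟩
  · have := hrow r
    simp only [Pi.add_apply, sum_add_distrib, hSrow]
    omega
  · have := hcol c
    simp only [Pi.add_apply, sum_add_distrib, hScol]
    omega

/-- Hall's condition for the support of `M` follows by double counting its line sums. -/
theorem exists_perm_pos_of_sum_eq {M : α → α → ℕ} {s : ℕ} (hs : 0 < s)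
    (hrow : ∀ r, ∑ c, M r c = s) (hcol : ∀ c, ∑ r, M r c = s) :
    ∃ π : Equiv.Perm α, ∀ r, 0 < M r (π r) := by
  let supp (r : α) : Finset α := {c | 0 < M r c}
  have hall (A : Finset α) : #A ≤ #(A.biUnion supp) := by
    have hsupp : ∀ r ∈ A, ∑ c ∈ A.biUnion supp, M r c = s := fun r hr => by
      rw [← hrow r]
      refine sum_subset (subset_univ _) fun c _ hc => ?_
      by_contra h
      exact hc (mem_biUnion.mpr ⟨r, hr, by simp only [mem_filter, mem_univ, true_and, supp]; omega⟩)
    refine Nat.le_of_mul_le_mul_right ?_ hs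
    calc #A * s = ∑ r ∈ A, ∑ c ∈ A.biUnion supp, M r c := by simp [sum_congr rfl hsupp]
      _ ≤ ∑ r, ∑ c ∈ A.biUnion supp, M r c := sum_le_sum_of_subset (subset_univ A)
      _ = #(A.biUnion supp) * s := by rw [sum_comm]; simp [hcol]
  obtain ⟨f, hf, hfsupp⟩ := (all_card_le_biUnion_card_iff_exists_injective supp).mp hall
  exact ⟨Equiv.ofBijective f hf.bijective_of_finite, fun r => by simpa [supp] using hfsupp r⟩

theorem exists_perm_decomposition_of_sum_eq (s : ℕ) {M : α → α → ℕ} (hrow : ∀ r, ∑ c, M r c = s)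
    (hcol : ∀ c, ∑ r, M r c = s) :
    ∃ π : Fin s → Equiv.Perm α, ∀ r c, ∑ t, (if π t r = c then 1 else 0) = M r c := by
  induction s generalizing M with
  | zero =>
    refine ⟨Fin.elim0, fun r c => ?_⟩
    simpa using (sum_eq_zero_iff.mp (hrow r) c (mem_univ c)).symm
  | succ s ih =>
    obtain ⟨π₀, hπ₀⟩ := exists_perm_pos_of_sum_eq s.succ_pos hrow hcol
    let P : α → α → ℕ := fun r c => if π₀ r = c then 1 else 0
    have hPM : P ≤ M := fun r c => by
      simp only [P]
      split_ifs with h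
      · exact h ▸ hπ₀ r
      · exact Nat.zero_le _
    obtain ⟨π, hπ⟩ := ih (M := M - P)
      (fun r => by
        simp only [Pi.sub_apply]
        rw [sum_tsub_distrib _ fun c _ => hPM r c, hrow r]
        simp [P])
      (fun c => by
        simp only [Pi.sub_apply]
        rw [sum_tsub_distrib _ fun r _ => hPM r c, hcol c, sum_ite_perm_apply_eq,
          Nat.add_sub_cancel])
    refine ⟨Fin.cons π₀ π, fun r c => ?_⟩
    have : P r c ≤ M r c := hPM r c
    rw [Fin.sum_univ_succ]
    simp only [Fin.cons_zero, Fin.cons_succ, hπ, Pi.sub_apply]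
    simp only [P] at this ⊢
    omega

/-- König's edge colouring theorem for bipartite multigraphs, with colours indexed by `τ`. -/
theorem exists_matching_decomposition (τ : Type*) [Fintype τ] {M : α → α → ℕ}
    (hrow : ∀ r, ∑ c, M r c ≤ Fintype.card τ) (hcol : ∀ c, ∑ r, M r c ≤ Fintype.card τ) :
    ∃ A : τ → α → α → ℕ, (∀ t r, ∑ c, A t r c ≤ 1) ∧ (∀ t c, ∑ r, A t r c ≤ 1) ∧
      ∀ r c, ∑ t, A t r c = M r c := by
  classical
  obtain ⟨N, hMN, hNrow, hNcol⟩ := exists_regular_ge hrow hcol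
  obtain ⟨π, hπ⟩ := exists_perm_decomposition_of_sum_eq _ hNrow hNcol
  let σ (t : τ) := π (Fintype.equivFin τ t)
  have hσ (r c : α) : ∑ t, (if σ t r = c then 1 else 0) = N r c := by
    rw [← hπ]
    exact Fintype.sum_equiv (Fintype.equivFin τ) _ _ fun t => rfl
  choose A hA hAM using fun r c =>
    exists_le_sum_eq (fun t => if σ t r = c then 1 else 0) ((hMN r c).trans (hσ r c).ge)
  refine ⟨fun t r c => A r c t, fun t r => ?_, fun t c => ?_, hAM⟩
  · calc ∑ c, A r c t ≤ ∑ c, (if σ t r = c then 1 else 0) := sum_le_sum fun c _ => hA r c t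
      _ = 1 := by simp
  · calc ∑ r, A r c t ≤ ∑ r, (if σ t r = c then 1 else 0) := sum_le_sum fun r _ => hA r c t
      _ = 1 := sum_ite_perm_apply_eq _ c

/-- Vertex `j` is split into the `c j` copies `⟨j, p⟩`. -/
theorem exists_blowup_of_sum_le_mul {F : α → α → ℕ} {c : α → ℕ} {W : ℕ}
    (hrow : ∀ j, ∑ k, F j k ≤ c j * W) (hcol : ∀ k, ∑ j, F j k ≤ c k * W) :
    ∃ E : (Σ j, Fin (c j)) → (Σ j, Fin (c j)) → ℕ, (∀ x, ∑ y, E x y ≤ W) ∧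
      (∀ y, ∑ x, E x y ≤ W) ∧ ∀ j k, ∑ p, ∑ q, E ⟨j, p⟩ ⟨k, q⟩ = F j k := by
  choose ρ hρ hρW using fun j =>
    exists_matrix_row_sums_col_le (fun k => F j k) (β := Fin (c j)) (by simpa using hrow j)
  choose γ hγ hγW using fun k =>
    exists_matrix_row_sums_col_le (fun j => F j k) (β := Fin (c k)) (by simpa using hcol k)
  choose B hBrow hBcol using fun j k =>
    exists_matrix_with_margins (ρ j k) (γ k j) ((hρ j k).trans (hγ k j).symm)
  refine ⟨fun x y => B x.1 y.1 x.2 y.2, fun x => ?_, fun y => ?_, fun j k => ?_⟩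
  · simpa only [Fintype.sum_sigma, hBrow] using hρW x.1 x.2
  · simpa only [Fintype.sum_sigma, hBcol] using hγW y.1 y.2
  · simp only [hBrow, hρ]

theorem exists_split_of_sum_le_mul (τ : Type*) [Fintype τ] {F : α → α → ℕ} {c : α → ℕ}
    (hrow : ∀ j, ∑ k, F j k ≤ c j * Fintype.card τ)
    (hcol : ∀ k, ∑ j, F j k ≤ c k * Fintype.card τ) :
    ∃ G : τ → α → α → ℕ, (∀ t j, ∑ k, G t j k ≤ c j) ∧ (∀ t k, ∑ j, G t j k ≤ c k) ∧
      ∀ j k, ∑ t, G t j k = F j k := by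
  obtain ⟨E, hErow, hEcol, hEF⟩ := exists_blowup_of_sum_le_mul hrow hcol
  obtain ⟨A, hArow, hAcol, hAE⟩ := exists_matching_decomposition τ hErow hEcol
  refine ⟨fun t j k => ∑ p, ∑ q, A t ⟨j, p⟩ ⟨k, q⟩, fun t j => ?_, fun t k => ?_, fun j k => ?_⟩
  · calc ∑ k, ∑ p, ∑ q, A t ⟨j, p⟩ ⟨k, q⟩ = ∑ p, ∑ y, A t ⟨j, p⟩ y := by
          rw [sum_comm]; simp only [Fintype.sum_sigma]
      _ ≤ ∑ p : Fin (c j), 1 := sum_le_sum fun p _ => hArow t _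
      _ = c j := by simp
  · calc ∑ j, ∑ p, ∑ q, A t ⟨j, p⟩ ⟨k, q⟩ = ∑ q, ∑ x, A t x ⟨k, q⟩ := by
          simp only [Fintype.sum_sigma]; rw [sum_comm]; exact sum_congr rfl fun j _ => sum_comm
      _ ≤ ∑ q : Fin (c k), 1 := sum_le_sum fun q _ => hAcol t _
      _ = c k := by simp
  · simp only [← hEF, ← hAE]
    rw [sum_comm]
    exact sum_congr rfl fun p _ => sum_comm

end Matchings

section Arcs

variable {α : Type*} [DecidableEq α]

def arc (j k : α) : α → α → ℕ := fun a b => if a = j ∧ b = k then 1 else 0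

def edge (j k : α) : α → α → ℕ := arc j k + arc k j

lemma arc_apply_swap (j k a b : α) : arc j k b a = arc k j a b := by
  simp only [arc, and_comm]

lemma edge_comm (j k : α) : edge j k = edge k j := add_comm _ _

lemma edge_apply_swap (j k a b : α) : edge j k b a = edge j k a b := by
  simp only [edge, Pi.add_apply, arc_apply_swap, add_comm]

lemma edge_apply_self {j k : α} (h : j ≠ k) (a : α) : edge j k a a = 0 := by
  have hjk : ¬(a = j ∧ a = k) := fun ⟨rfl, hk⟩ => h hk
  have hkj : ¬(a = k ∧ a = j) := fun ⟨rfl, hj⟩ => h hj.symm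
  simp [edge, arc, hjk, hkj]

lemma arc_le {F : α → α → ℕ} {j k : α} (h : 0 < F j k) : arc j k ≤ F := by
  intro a b
  unfold arc
  split_ifs with hab
  · obtain ⟨rfl, rfl⟩ := hab
    exact h
  · exact Nat.zero_le _

end Arcs

section Orientation

variable {α : Type*} [Fintype α]

def IsBalancedOrientation (D F : α → α → ℕ) : Prop :=
  (∀ a b, F a b + F b a = D a b) ∧ ∀ a, ∑ b, F a b ≤ ∑ b, F b a + 1 ∧ ∑ b, F b a ≤ ∑ b, F a b + 1

lemma exists_two_le_or_exists_pos_pos {f : α → ℕ} (h : 2 ≤ ∑ b, f b) :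
    (∃ b, 2 ≤ f b) ∨ ∃ b b', b ≠ b' ∧ 0 < f b ∧ 0 < f b' := by
  by_contra! hcon
  obtain ⟨b, -, hb⟩ := exists_ne_zero_of_sum_ne_zero (s := univ) (f := f) (by omega)
  have hsingle : ∑ b', f b' = f b :=
    sum_eq_single b (fun b' _ hb' => Nat.eq_zero_of_le_zero (hcon.2 b b' hb'.symm (by omega)))
      (by simp)
  have := hcon.1 b
  omega

lemma exists_isBalancedOrientation_of_sum_le_one {D : α → α → ℕ}
    (hsymm : ∀ a b, D a b = D b a) (hdiag : ∀ a, D a a = 0) (hdeg : ∀ a, ∑ b, D a b ≤ 1) :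
    ∃ F, IsBalancedOrientation D F := by
  let e := Fintype.equivFin α
  refine ⟨fun a b => if e a < e b then D a b else 0, fun a b => ?_, fun a => ?_⟩
  · rcases lt_trichotomy (e a) (e b) with h | h | h
    · simp [h, h.not_gt]
    · obtain rfl := e.injective h
      simp [hdiag]
    · simp [h, h.not_gt, hsymm a b]
  · have hout : ∑ b, (if e a < e b then D a b else 0) ≤ 1 :=
      (sum_le_sum fun b _ => by split_ifs <;> simp).trans (hdeg a)
    have hin : ∑ b, (if e b < e a then D b a else 0) ≤ 1 :=
      (sum_le_sum fun b _ => by split_ifs <;> simp [hsymm b a]).trans (hdeg a)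
    beta_reduce
    constructor <;> omega

variable [DecidableEq α]

@[simp] lemma sum_arc_row (j k a : α) : ∑ b, arc j k a b = if a = j then 1 else 0 := by
  by_cases h : a = j <;> simp [arc, h]

@[simp] lemma sum_arc_col (j k b : α) : ∑ a, arc j k a b = if b = k then 1 else 0 := by
  by_cases h : b = k <;> simp [arc, h]

lemma sum_sum_edge (j k : α) : ∑ a, ∑ b, edge j k a b = 2 := by
  simp [edge, sum_add_distrib]

namespace IsBalancedOrientation

variable {D F : α → α → ℕ}

lemma add_arc_add_arc (h : IsBalancedOrientation D F) (j k : α) :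
    IsBalancedOrientation (D + edge j k + edge j k) (F + arc j k + arc k j) := by
  refine ⟨fun a b => ?_, fun a => ?_⟩
  · have := h.1 a b
    simp only [Pi.add_apply, edge, arc_apply_swap]
    omega
  · have := h.2 a
    simp only [Pi.add_apply, sum_add_distrib, sum_arc_row, sum_arc_col]
    omega

lemma reroute {j k l : α} (h : IsBalancedOrientation (D + edge j l) (F + arc j l)) :
    IsBalancedOrientation (D + edge j k + edge k l) (F + arc j k + arc k l) := by
  refine ⟨fun a b => ?_, fun a => ?_⟩
  · have := h.1 a b
    simp only [Pi.add_apply, edge, arc_apply_swap] at this ⊢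
    omega
  · have := h.2 a
    simp only [Pi.add_apply, sum_add_distrib, sum_arc_row, sum_arc_col] at this ⊢
    omega

lemma exists_reroute {j l : α} (h : IsBalancedOrientation (D + edge j l) F) (k : α) :
    ∃ F', IsBalancedOrientation (D + edge j k + edge k l) F' := by
  have hpos : 0 < F j l ∨ 0 < F l j := by
    have := h.1 j l
    simp only [edge, Pi.add_apply, arc, and_self, ↓reduceIte] at this
    omega
  rcases hpos with hpos | hpos
  · rw [← tsub_add_cancel_of_le (arc_le hpos)] at h
    exact ⟨_, h.reroute⟩
  · rw [edge_comm, ← tsub_add_cancel_of_le (arc_le hpos)] at h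
    rw [edge_comm j k, edge_comm k l, add_right_comm]
    exact ⟨_, h.reroute⟩

end IsBalancedOrientation

theorem exists_isBalancedOrientation {D : α → α → ℕ} (hsymm : ∀ a b, D a b = D b a)
    (hdiag : ∀ a, D a a = 0) : ∃ F, IsBalancedOrientation D F := by
  induction hN : ∑ a, ∑ b, D a b using Nat.strong_induction_on generalizing D with
  | _ N ih =>
  by_cases hdeg : ∀ a, ∑ b, D a b ≤ 1
  · exact exists_isBalancedOrientation_of_sum_le_one hsymm hdiag hdeg
  obtain ⟨k, hk⟩ := not_forall.mp hdeg
  rcases exists_two_le_or_exists_pos_pos (not_le.mp hk) with ⟨j, hj⟩ | ⟨j, l, hjl, hj, hl⟩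
  · set D₀ := D - (edge k j + edge k j)
    have hD : D = D₀ + edge k j + edge k j := by
      rw [add_assoc, tsub_add_cancel_of_le]
      intro a b
      simp only [Pi.add_apply, edge, arc]
      split_ifs <;> grind
    obtain ⟨F, hF⟩ := ih (∑ a, ∑ b, D₀ a b)
      (by simp only [hD, Pi.add_apply, sum_add_distrib, sum_sum_edge] at hN; omega)
      (fun a b => by simp only [D₀, Pi.sub_apply, Pi.add_apply, edge_apply_swap, hsymm a b])
      (fun a => by simp [D₀, hdiag]) rfl
    exact ⟨_, hD ▸ hF.add_arc_add_arc k j⟩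
  · -- shortcut the path `j - k - l` by a new edge `j - l`, then expand it back
    set D₀ := D - (edge k j + edge k l)
    have hD : D = D₀ + edge j k + edge k l := by
      rw [add_assoc, edge_comm j k, tsub_add_cancel_of_le]
      intro a b
      simp only [Pi.add_apply, edge, arc]
      split_ifs <;> grind
    obtain ⟨F, hF⟩ := ih (∑ a, ∑ b, (D₀ + edge j l) a b)
      (by simp only [hD, Pi.add_apply, sum_add_distrib, sum_sum_edge] at hN ⊢; omega)
      (fun a b => by
        simp only [D₀, Pi.sub_apply, Pi.add_apply, edge_apply_swap, hsymm a b])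
      (fun a => by simp [D₀, hdiag, edge_apply_self hjl]) rfl
    exact hD ▸ hF.exists_reroute k

end Orientation

theorem exists_symm_split {α : Type*} [Fintype α] [DecidableEq α] (τ : Type*) [Fintype τ]
    {D : α → α → ℕ} {c : α → ℕ} (hsymm : ∀ j k, D j k = D k j) (hdiag : ∀ j, D j j = 0)
    (hdeg : ∀ j, ∑ k, D j k ≤ 2 * (c j * Fintype.card τ)) :
    ∃ H : τ → α → α → ℕ, (∀ t j k, H t j k = H t k j) ∧ (∀ t j, H t j j = 0) ∧
      (∀ t j, ∑ k, H t j k ≤ 2 * c j) ∧ ∀ j k, ∑ t, H t j k = D j k := by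
  obtain ⟨F, hFD, hFbal⟩ := exists_isBalancedOrientation hsymm hdiag
  have hdegF (j : α) : ∑ k, F j k + ∑ k, F k j = ∑ k, D j k := by
    rw [← sum_add_distrib]
    exact sum_congr rfl fun k _ => hFD j k
  obtain ⟨G, hGrow, hGcol, hGF⟩ := exists_split_of_sum_le_mul τ (F := F) (c := c)
    (fun j => by have := hdegF j; have := hdeg j; have := hFbal j; omega)
    (fun k => by have := hdegF k; have := hdeg k; have := hFbal k; omega)
  have hGdiag (t : τ) (j : α) : G t j j = 0 := by
    have hF : ∑ t, G t j j = 0 := by have := hFD j j; rw [hGF]; have := hdiag j; omega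
    exact sum_eq_zero_iff.mp hF t (mem_univ t)
  refine ⟨fun t j k => G t j k + G t k j, fun t j k => add_comm _ _, fun t j => by simp [hGdiag],
    fun t j => ?_, fun j k => ?_⟩
  · have := hGrow t j
    have := hGcol t j
    simp only [sum_add_distrib]
    omega
  · simp only [sum_add_distrib, hGF, hFD]

/-- In a two-level proportional one-rate bidirectional Clos network, a demand
`D` is feasible iff the total demand at each low-level switch does not exceed its total
link capacity. -/
theorem stmt_2 (m n : ℕ) (C : Fin n → Fin m → ℕ)
    (WT : Fin n → ℕ) (WL : Fin m → ℕ)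
    (hprop : ∀ i j, C i j = 2 * WT i * WL j)
    (D : Fin m → Fin m → ℕ)
    (hDsymm : ∀ j k, D j k = D k j)
    (hDdiag : ∀ j, D j j = 0) :
    (∃ Y : Fin n → Fin m → Fin m → ℕ,
        (∀ i j k, Y i j k = Y i k j) ∧ (∀ i j, Y i j j = 0) ∧
        (∀ i j, ∑ k, Y i j k ≤ C i j) ∧
        (∀ j k, D j k ≤ ∑ i, Y i j k))
    ↔ (∀ j, ∑ k, D j k ≤ ∑ i, C i j) := by
  constructor
  · rintro ⟨Y, -, -, hcap, hdem⟩ j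
    calc ∑ k, D j k ≤ ∑ k, ∑ i, Y i j k := sum_le_sum fun k _ => hdem j k
      _ = ∑ i, ∑ k, Y i j k := sum_comm
      _ ≤ ∑ i, C i j := sum_le_sum fun i _ => hcap i j
  · intro hcond
    -- `T_i` takes the `WT i` parts indexed by `⟨i, p⟩`
    obtain ⟨H, hHsymm, hHdiag, hHdeg, hHD⟩ := exists_symm_split (Σ i, Fin (WT i)) (c := WL)
      hDsymm hDdiag fun j => (hcond j).trans_eq <| by
        simp only [hprop, Fintype.card_sigma, Fintype.card_fin, mul_sum]
        exact sum_congr rfl fun i _ => by ring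
    refine ⟨fun i j k => ∑ p, H ⟨i, p⟩ j k, fun i j k => sum_congr rfl fun p _ => hHsymm _ j k,
      fun i j => sum_eq_zero fun p _ => hHdiag _ j, fun i j => ?_,
      fun j k => (hHD j k).symm.trans (Fintype.sum_sigma _) |>.le⟩
    calc ∑ k, ∑ p, H ⟨i, p⟩ j k = ∑ p, ∑ k, H ⟨i, p⟩ j k := sum_comm
      _ ≤ ∑ p : Fin (WT i), 2 * WL j := sum_le_sum fun p _ => hHdeg _ j
      _ = C i j := by simp only [sum_const, card_univ, Fintype.card_fin, smul_eq_mul, hprop]; ring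
end

section
/- In a three-stage proportional one-rate symmetric Clos network, a demand D' : Fin m → Fin m → ℕ is feasible — i.e., there exists a feasible routing scheme Y with Σ_i Y i j k ≥ D' j k for all j, k — if and only if for every input switch index j, Σ_k D' j k ≤ Σ_i C i j, and for every output switch index k, Σ_j D' j k ≤ Σ_i C i k. -/
open Finset

namespace Stmt3Aux

variable {ι κ : Type*}

/-- Pick an entrywise-smaller vector with prescribed total. -/
lemma exists_sub_sum [Fintype κ] [DecidableEq κ] (v : κ → ℕ) (s : ℕ) (hs : s ≤ ∑ k, v k) :
    ∃ u : κ → ℕ, (∀ k, u k ≤ v k) ∧ ∑ k, u k = s := by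
  induction s with
  | zero => exact ⟨0, fun k => Nat.zero_le _, by simp⟩
  | succ s ih =>
    obtain ⟨u, hu, hsum⟩ := ih (Nat.le_of_succ_le hs)
    have hex : ∃ k, u k < v k := by
      by_contra h
      push_neg at h
      have : ∑ k, v k ≤ ∑ k, u k := Finset.sum_le_sum fun k _ => h k
      omega
    obtain ⟨k0, hk0⟩ := hex
    refine ⟨Function.update u k0 (u k0 + 1), ?_, ?_⟩
    · intro k
      rcases eq_or_ne k k0 with rfl | hne
      · simpa using hk0
      · simpa [Function.update_of_ne hne] using hu k
    · have h2 : u k0 + ∑ k ∈ Finset.univ.erase k0, u k = s := by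
        rw [Finset.add_sum_erase _ u (Finset.mem_univ k0)]; exact hsum
      rw [Finset.sum_update_of_mem (Finset.mem_univ k0), ← Finset.erase_eq]
      omega

/-- Split a vector with total `≤ W * S` into `W` pieces each of total `≤ S`. -/
lemma split1D [Fintype κ] [DecidableEq κ] (S : ℕ) :
    ∀ (W : ℕ) (v : κ → ℕ), (∑ k, v k ≤ W * S) →
    ∃ u : Fin W → κ → ℕ, (∀ k, ∑ r, u r k = v k) ∧ (∀ r, ∑ k, u r k ≤ S) := by
  intro W
  induction W with
  | zero =>
    intro v hv
    refine ⟨fun _ _ => 0, fun k => ?_, fun r => r.elim0⟩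
    have : ∑ k, v k = 0 := by omega
    have := (Finset.sum_eq_zero_iff).1 this k (Finset.mem_univ k)
    simp [this]
  | succ W ih =>
    intro v hv
    obtain ⟨u0, hu0le, hu0sum⟩ := exists_sub_sum v (min S (∑ k, v k)) (min_le_right _ _)
    have hrem : ∑ k, (v k - u0 k) ≤ W * S := by
      rw [Finset.sum_tsub_distrib Finset.univ (fun k _ => hu0le k), hu0sum]
      have h1 : (W + 1) * S = W * S + S := by ring
      rcases le_total S (∑ k, v k) with h | h
      · rw [min_eq_left h]; omega
      · rw [min_eq_right h]; omega
    obtain ⟨u', hu'1, hu'2⟩ := ih (fun k => v k - u0 k) hrem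
    refine ⟨Fin.cons u0 u', fun k => ?_, fun r => ?_⟩
    · rw [Fin.sum_univ_succ]
      simp only [Fin.cons_zero, Fin.cons_succ]
      have := hu'1 k
      have := hu0le k
      omega
    · refine Fin.cases ?_ ?_ r
      · simpa [Fin.cons_zero] using (le_trans (le_of_eq hu0sum) (min_le_left _ _))
      · intro r'
        simpa [Fin.cons_succ] using hu'2 r'

/-- Pad a matrix with row/column sums `≤ S` up to one with row/column sums exactly `S`. -/
lemma pad_done [Fintype ι] [Fintype κ] (S : ℕ) (hcard : Fintype.card ι = Fintype.card κ)
    (M : ι → κ → ℕ) (hr : ∀ j, ∑ k, M j k ≤ S) (hc : ∀ k, ∑ j, M j k ≤ S)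
    (htot : S * Fintype.card ι ≤ ∑ j, ∑ k, M j k) :
    (∀ j, ∑ k, M j k = S) ∧ (∀ k, ∑ j, M j k = S) := by
  have hSι : ∑ _j : ι, S = S * Fintype.card ι := by
    simp [Finset.sum_const, mul_comm, Finset.card_univ]
  have hSκ : ∑ _k : κ, S = S * Fintype.card κ := by
    simp [Finset.sum_const, mul_comm, Finset.card_univ]
  have h1 : ∑ j : ι, ∑ k, M j k ≤ ∑ _j : ι, S := Finset.sum_le_sum fun j _ => hr j
  have heq : ∑ j : ι, ∑ k, M j k = ∑ _j : ι, S := le_antisymm h1 (by omega)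
  have hrows := (Finset.sum_eq_sum_iff_of_le (fun j _ => hr j)).1 heq
  have htot2 : ∑ k : κ, ∑ j, M j k = ∑ _k : κ, S := by
    rw [Finset.sum_comm, heq, hSι, hSκ, hcard]
  have hcols := (Finset.sum_eq_sum_iff_of_le (fun k _ => hc k)).1 htot2
  exact ⟨fun j => hrows j (Finset.mem_univ j), fun k => hcols k (Finset.mem_univ k)⟩

lemma pad [Fintype ι] [Fintype κ] [DecidableEq ι] [DecidableEq κ]
    (S : ℕ) (hcard : Fintype.card ι = Fintype.card κ) :
    ∀ (d : ℕ) (M : ι → κ → ℕ), (∀ j, ∑ k, M j k ≤ S) → (∀ k, ∑ j, M j k ≤ S) →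
    S * Fintype.card ι ≤ d + ∑ j, ∑ k, M j k →
    ∃ N : ι → κ → ℕ, (∀ j k, M j k ≤ N j k) ∧ (∀ j, ∑ k, N j k = S) ∧ (∀ k, ∑ j, N j k = S) := by
  intro d
  induction d with
  | zero =>
    intro M hr hc htot
    obtain ⟨h1, h2⟩ := pad_done S hcard M hr hc (by omega)
    exact ⟨M, fun j k => le_rfl, h1, h2⟩
  | succ d ih =>
    intro M hr hc htot
    by_cases hall : ∀ j, ∑ k, M j k = S
    · have htot' : S * Fintype.card ι ≤ ∑ j, ∑ k, M j k := by
        have : ∑ j : ι, ∑ k, M j k = ∑ _j : ι, S := Finset.sum_congr rfl fun j _ => hall j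
        rw [this]
        simp [Finset.sum_const, mul_comm, Finset.card_univ]
      obtain ⟨h1, h2⟩ := pad_done S hcard M hr hc htot'
      exact ⟨M, fun j k => le_rfl, h1, h2⟩
    · push_neg at hall
      obtain ⟨j0, hj0⟩ := hall
      have hj0' : ∑ k, M j0 k < S := lt_of_le_of_ne (hr j0) hj0
      have htotlt : ∑ j : ι, ∑ k, M j k < S * Fintype.card ι := by
        have : ∑ j : ι, ∑ k, M j k < ∑ _j : ι, S :=
          Finset.sum_lt_sum (fun j _ => hr j) ⟨j0, Finset.mem_univ j0, hj0'⟩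
        have hS : ∑ _j : ι, S = S * Fintype.card ι := by
          simp [Finset.sum_const, mul_comm, Finset.card_univ]
        omega
      have hex : ∃ k0, ∑ j, M j k0 < S := by
        by_contra h
        push_neg at h
        have h2 : ∀ k, ∑ j, M j k = S := fun k => le_antisymm (hc k) (h k)
        have : ∑ k : κ, ∑ j, M j k = ∑ _k : κ, S := Finset.sum_congr rfl fun k _ => h2 k
        rw [Finset.sum_comm] at htotlt
        rw [this] at htotlt
        have hS : ∑ _k : κ, S = S * Fintype.card κ := by
          simp [Finset.sum_const, mul_comm, Finset.card_univ]
        have hSS : S * Fintype.card κ = S * Fintype.card ι := by rw [hcard]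
        omega
      obtain ⟨k0, hk0⟩ := hex
      set M' : ι → κ → ℕ :=
        fun j k => M j k + (if j = j0 then 1 else 0) * (if k = k0 then 1 else 0) with hM'
      have hrowM' : ∀ j, ∑ k, M' j k = ∑ k, M j k + (if j = j0 then 1 else 0) := by
        intro j
        simp only [hM']
        rw [Finset.sum_add_distrib, ← Finset.mul_sum]
        congr 1
        rw [Finset.sum_ite_eq' Finset.univ k0 (fun _ => (1 : ℕ))]
        simp
      have hcolM' : ∀ k, ∑ j, M' j k = ∑ j, M j k + (if k = k0 then 1 else 0) := by
        intro k
        simp only [hM']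
        rw [Finset.sum_add_distrib]
        congr 1
        rw [← Finset.sum_mul, Finset.sum_ite_eq' Finset.univ j0 (fun _ => (1 : ℕ))]
        simp
      have hra : ∀ j, ∑ k, M' j k ≤ S := by
        intro j
        rw [hrowM' j]
        rcases eq_or_ne j j0 with rfl | hne
        · simp only [if_pos rfl, if_true]; omega
        · simp only [if_neg hne]; simpa using hr j
      have hca : ∀ k, ∑ j, M' j k ≤ S := by
        intro k
        rw [hcolM' k]
        rcases eq_or_ne k k0 with rfl | hne
        · simp only [if_pos rfl, if_true]; omega
        · simp only [if_neg hne]; simpa using hc k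
      have hta : S * Fintype.card ι ≤ d + ∑ j, ∑ k, M' j k := by
        have : ∑ j : ι, ∑ k, M' j k = (∑ j : ι, ∑ k, M j k) + 1 := by
          calc ∑ j : ι, ∑ k, M' j k
              = ∑ j : ι, (∑ k, M j k + (if j = j0 then 1 else 0)) :=
                Finset.sum_congr rfl fun j _ => hrowM' j
            _ = (∑ j : ι, ∑ k, M j k) + ∑ j : ι, (if j = j0 then 1 else 0) :=
                Finset.sum_add_distrib
            _ = (∑ j : ι, ∑ k, M j k) + 1 := by
                rw [Finset.sum_ite_eq' Finset.univ j0 (fun _ => (1 : ℕ))]; simp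
        omega
      obtain ⟨N, hN1, hN2, hN3⟩ := ih M' hra hca hta
      refine ⟨N, fun j k => le_trans ?_ (hN1 j k), hN2, hN3⟩
      simp only [hM']
      exact Nat.le_add_right _ _

/-- Hall step: a regular nonnegative integer matrix has a permutation in its support. -/
lemma hall_step [Fintype ι] [Fintype κ] [DecidableEq ι] [DecidableEq κ]
    (hcard : Fintype.card ι = Fintype.card κ) (Δ : ℕ) (hΔ : 0 < Δ)
    (N : ι → κ → ℕ) (hr : ∀ j, ∑ k, N j k = Δ) (hc : ∀ k, ∑ j, N j k = Δ) :
    ∃ f : ι → κ, Function.Bijective f ∧ ∀ j, 0 < N j (f j) := by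
  have hhall : ∀ s : Finset ι,
      s.card ≤ (s.biUnion (fun j => Finset.univ.filter (fun k => 0 < N j k))).card := by
    intro s
    set B := s.biUnion (fun j => Finset.univ.filter (fun k => 0 < N j k)) with hB
    have key : Δ * s.card ≤ Δ * B.card := by
      have h1 : Δ * s.card = ∑ j ∈ s, ∑ k, N j k := by
        rw [Finset.sum_congr rfl fun j _ => hr j]
        simp [Finset.sum_const, mul_comm]
      have h2 : ∑ j ∈ s, ∑ k, N j k = ∑ k : κ, ∑ j ∈ s, N j k := Finset.sum_comm
      have h3 : ∑ k : κ, ∑ j ∈ s, N j k = ∑ k ∈ B, ∑ j ∈ s, N j k := by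
        refine (Finset.sum_subset (Finset.subset_univ B) ?_).symm
        intro k _ hk
        refine Finset.sum_eq_zero fun j hj => ?_
        by_contra h
        exact hk (Finset.mem_biUnion.2 ⟨j, hj, Finset.mem_filter.2
          ⟨Finset.mem_univ k, Nat.pos_of_ne_zero h⟩⟩)
      have h4 : ∑ k ∈ B, ∑ j ∈ s, N j k ≤ ∑ k ∈ B, ∑ j : ι, N j k :=
        Finset.sum_le_sum fun k _ => Finset.sum_le_sum_of_subset (Finset.subset_univ s)
      have h5 : ∑ k ∈ B, ∑ j : ι, N j k = Δ * B.card := by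
        rw [Finset.sum_congr rfl fun k _ => hc k]
        simp [Finset.sum_const, mul_comm]
      omega
    exact Nat.le_of_mul_le_mul_left key hΔ
  obtain ⟨f, hinj, hmem⟩ :=
    (Finset.all_card_le_biUnion_card_iff_exists_injective
      (fun j : ι => Finset.univ.filter (fun k => 0 < N j k))).1 hhall
  refine ⟨f, (Fintype.bijective_iff_injective_and_card f).2 ⟨hinj, hcard⟩, fun j => ?_⟩
  have := hmem j
  simpa using (Finset.mem_filter.1 this).2

/-- König-type peeling: decompose `D ≤ N` (with `N` `Δ`-regular) into `Δ` partial matchings. -/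
lemma koenig [Fintype ι] [Fintype κ] [DecidableEq ι] [DecidableEq κ]
    (hcard : Fintype.card ι = Fintype.card κ) :
    ∀ (Δ : ℕ) (D N : ι → κ → ℕ), (∀ j k, D j k ≤ N j k) →
    (∀ j, ∑ k, N j k = Δ) → (∀ k, ∑ j, N j k = Δ) →
    ∃ L : Fin Δ → ι → κ → ℕ,
      (∀ j k, ∑ t, L t j k = D j k) ∧ (∀ t j, ∑ k, L t j k ≤ 1) ∧
      (∀ t k, ∑ j, L t j k ≤ 1) := by
  intro Δ
  induction Δ with
  | zero =>
    intro D N hDN hr hc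
    refine ⟨fun _ _ _ => 0, fun j k => ?_, fun t => t.elim0, fun t => t.elim0⟩
    have h1 : N j k ≤ ∑ k', N j k' := Finset.single_le_sum (fun _ _ => Nat.zero_le _)
      (Finset.mem_univ k)
    have := hDN j k
    have := hr j
    simp only [Finset.univ_eq_empty, Finset.sum_empty]
    omega
  | succ Δ ih =>
    intro D N hDN hr hc
    obtain ⟨f, hbij, hf⟩ := hall_step hcard (Δ + 1) (Nat.succ_pos _) N hr hc
    set L0 : ι → κ → ℕ := fun j k => if k = f j ∧ 0 < D j k then 1 else 0 with hL0
    set P : ι → κ → ℕ := fun j k => if k = f j then 1 else 0 with hP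
    have hL0P : ∀ j k, L0 j k ≤ P j k := by
      intro j k; simp only [hL0, hP]; split_ifs with h1 h2 <;> simp_all
    have hPN : ∀ j k, P j k ≤ N j k := by
      intro j k; simp only [hP]
      split_ifs with h
      · subst h; exact hf j
      · exact Nat.zero_le _
    have hL0D : ∀ j k, L0 j k ≤ D j k := by
      intro j k; simp only [hL0]; split_ifs with h
      · exact h.2
      · exact Nat.zero_le _
    have hD'N' : ∀ j k, D j k - L0 j k ≤ N j k - P j k := by
      intro j k
      simp only [hL0, hP]
      by_cases h : k = f j
      · have hN := hf j
        have hD := hDN j k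
        subst h
        by_cases hd : 0 < D j (f j) <;> simp [hd] <;> try omega
      · simp [h]; exact hDN j k
    have hrP : ∀ j, ∑ k, P j k = 1 := by
      intro j
      simp only [hP]
      rw [Finset.sum_ite_eq' Finset.univ (f j) (fun _ => (1 : ℕ))]
      simp
    have hcP : ∀ k, ∑ j, P j k = 1 := by
      intro k
      have : ∑ j : ι, P j k = ∑ k' : κ, (if k = k' then 1 else 0) := by
        refine Fintype.sum_bijective f hbij _ _ fun j => ?_
        simp only [hP]
      rw [this, Finset.sum_ite_eq Finset.univ k (fun _ => (1 : ℕ))]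
      simp
    have hrN' : ∀ j, ∑ k, (N j k - P j k) = Δ := by
      intro j
      rw [Finset.sum_tsub_distrib Finset.univ (fun k _ => hPN j k), hr j, hrP j]
      omega
    have hcN' : ∀ k, ∑ j, (N j k - P j k) = Δ := by
      intro k
      rw [Finset.sum_tsub_distrib Finset.univ (fun j _ => hPN j k), hc k, hcP k]
      omega
    obtain ⟨L', h1, h2, h3⟩ := ih (fun j k => D j k - L0 j k) (fun j k => N j k - P j k)
      hD'N' hrN' hcN'
    refine ⟨Fin.cons L0 L', fun j k => ?_, fun t j => ?_, fun t k => ?_⟩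
    · rw [Fin.sum_univ_succ]
      simp only [Fin.cons_zero, Fin.cons_succ]
      have := h1 j k
      have := hL0D j k
      omega
    · refine Fin.cases ?_ ?_ t
      · simp only [Fin.cons_zero]
        calc ∑ k, L0 j k ≤ ∑ k, P j k := Finset.sum_le_sum fun k _ => hL0P j k
          _ = 1 := hrP j
      · intro t'; simpa [Fin.cons_succ] using h2 t' j
    · refine Fin.cases ?_ ?_ t
      · simp only [Fin.cons_zero]
        calc ∑ j, L0 j k ≤ ∑ j, P j k := Finset.sum_le_sum fun j _ => hL0P j k
          _ = 1 := hcP k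
      · intro t'; simpa [Fin.cons_succ] using h3 t' k

lemma sum_sigma_univ {β : Type*} [AddCommMonoid β] {α : Type*} [Fintype α]
    {γ : α → Type*} [∀ a, Fintype (γ a)] (f : (Σ a, γ a) → β) :
    ∑ p, f p = ∑ a, ∑ g, f ⟨a, g⟩ := by
  rw [← Finset.univ_sigma_univ, Finset.sum_sigma]

end Stmt3Aux

/-- In a three-stage proportional one-rate symmetric Clos network, a demand
`D'` is feasible iff every row sum and every column sum of `D'` is within the total link
capacity of the corresponding input/output switch. -/
theorem stmt_3 (m n : ℕ) (C : Fin n → Fin m → ℕ)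
    (WT : Fin n → ℕ) (WL : Fin m → ℕ)
    (hprop : ∀ i j, C i j = WT i * WL j)
    (D' : Fin m → Fin m → ℕ) :
    (∃ Y : Fin n → Fin m → Fin m → ℕ,
        (∀ i j, ∑ k, Y i j k ≤ C i j) ∧
        (∀ i k, ∑ j, Y i j k ≤ C i k) ∧
        (∀ j k, D' j k ≤ ∑ i, Y i j k))
    ↔ ((∀ j, ∑ k, D' j k ≤ ∑ i, C i j) ∧ (∀ k, ∑ j, D' j k ≤ ∑ i, C i k)) := by
  classical
  constructor
  · rintro ⟨Y, hY1, hY2, hY3⟩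
    constructor
    · intro j
      calc ∑ k, D' j k ≤ ∑ k, ∑ i, Y i j k := Finset.sum_le_sum fun k _ => hY3 j k
        _ = ∑ i, ∑ k, Y i j k := Finset.sum_comm
        _ ≤ ∑ i, C i j := Finset.sum_le_sum fun i _ => hY1 i j
    · intro k
      calc ∑ j, D' j k ≤ ∑ j, ∑ i, Y i j k := Finset.sum_le_sum fun j _ => hY3 j k
        _ = ∑ i, ∑ j, Y i j k := Finset.sum_comm
        _ ≤ ∑ i, C i k := Finset.sum_le_sum fun i _ => hY2 i k
  · rintro ⟨h1, h2⟩
    set S : ℕ := ∑ i, WT i with hS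
    have hCsum : ∀ j, ∑ i, C i j = S * WL j := by
      intro j
      rw [hS, Finset.sum_mul]
      exact Finset.sum_congr rfl fun i _ => hprop i j
    have h1' : ∀ j, ∑ k, D' j k ≤ S * WL j := fun j => (hCsum j) ▸ h1 j
    have h2' : ∀ k, ∑ j, D' j k ≤ S * WL k := fun k => (hCsum k) ▸ h2 k
    -- Step A: split rows into virtual unit rows
    choose u hu1 hu2 using fun j =>
      Stmt3Aux.split1D S (WL j) (fun k => D' j k)
        (by rw [mul_comm]; exact h1' j)
    -- virtual index type
    set ι : Type := Σ j : Fin m, Fin (WL j) with hι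
    set M1 : ι → Fin m → ℕ := fun p k => u p.1 p.2 k with hM1
    have hM1col : ∀ k, ∑ p : ι, M1 p k ≤ S * WL k := by
      intro k
      rw [Stmt3Aux.sum_sigma_univ (fun p : ι => M1 p k)]
      calc ∑ j, ∑ r, u j r k = ∑ j, D' j k := Finset.sum_congr rfl fun j _ => hu1 j k
        _ ≤ S * WL k := h2' k
    have hM1row : ∀ p : ι, ∑ k, M1 p k ≤ S := fun p => hu2 p.1 p.2
    -- Step B: split columns into virtual unit columns
    choose w hw1 hw2 using fun k =>
      Stmt3Aux.split1D S (WL k) (fun p : ι => M1 p k)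
        (by rw [mul_comm]; exact hM1col k)
    set Dt : ι → ι → ℕ := fun p q => w q.1 q.2 p with hDt
    have hDtrow : ∀ p : ι, ∑ q : ι, Dt p q ≤ S := by
      intro p
      rw [Stmt3Aux.sum_sigma_univ (fun q : ι => Dt p q)]
      calc ∑ k, ∑ c, w k c p = ∑ k, M1 p k := Finset.sum_congr rfl fun k _ => hw1 k p
        _ ≤ S := hM1row p
    have hDtcol : ∀ q : ι, ∑ p : ι, Dt p q ≤ S := fun q => hw2 q.1 q.2
    have hblock : ∀ j k, (∑ r : Fin (WL j), ∑ c : Fin (WL k),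
        Dt ⟨j, r⟩ ⟨k, c⟩) = D' j k := by
      intro j k
      calc ∑ r : Fin (WL j), ∑ c : Fin (WL k), w k c ⟨j, r⟩
          = ∑ r : Fin (WL j), M1 ⟨j, r⟩ k :=
            Finset.sum_congr rfl fun r _ => hw1 k ⟨j, r⟩
        _ = D' j k := hu1 j k
    -- Step C: pad to an exactly S-regular matrix
    obtain ⟨N, hN1, hN2, hN3⟩ := Stmt3Aux.pad (ι := ι) (κ := ι) S rfl
      (S * Fintype.card ι) Dt hDtrow hDtcol (Nat.le_add_right _ _)
    -- Step D: König decomposition into S partial matchings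
    obtain ⟨L, hL1, hL2, hL3⟩ := Stmt3Aux.koenig (ι := ι) (κ := ι) rfl S Dt N hN1 hN2 hN3
    -- Step E: layers in original coordinates
    set Z : Fin S → Fin m → Fin m → ℕ :=
      fun t j k => ∑ r : Fin (WL j), ∑ c : Fin (WL k), L t ⟨j, r⟩ ⟨k, c⟩ with hZ
    have hZsum : ∀ j k, ∑ t, Z t j k = D' j k := by
      intro j k
      rw [hZ]
      simp only
      rw [Finset.sum_comm]
      calc ∑ r : Fin (WL j), ∑ t, ∑ c : Fin (WL k), L t ⟨j, r⟩ ⟨k, c⟩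
          = ∑ r : Fin (WL j), ∑ c : Fin (WL k), ∑ t, L t ⟨j, r⟩ ⟨k, c⟩ :=
            Finset.sum_congr rfl fun r _ => Finset.sum_comm
        _ = ∑ r : Fin (WL j), ∑ c : Fin (WL k), Dt ⟨j, r⟩ ⟨k, c⟩ :=
            Finset.sum_congr rfl fun r _ => Finset.sum_congr rfl fun c _ => hL1 _ _
        _ = D' j k := hblock j k
    have hZrow : ∀ t j, ∑ k, Z t j k ≤ WL j := by
      intro t j
      rw [hZ]
      simp only
      rw [Finset.sum_comm]
      calc ∑ r : Fin (WL j), ∑ k, ∑ c : Fin (WL k), L t ⟨j, r⟩ ⟨k, c⟩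
          = ∑ r : Fin (WL j), ∑ q : ι, L t ⟨j, r⟩ q :=
            Finset.sum_congr rfl fun r _ =>
              (Stmt3Aux.sum_sigma_univ (fun q : ι => L t ⟨j, r⟩ q)).symm
        _ ≤ ∑ _r : Fin (WL j), 1 := Finset.sum_le_sum fun r _ => hL2 t ⟨j, r⟩
        _ = WL j := by simp
    have hZcol : ∀ t k, ∑ j, Z t j k ≤ WL k := by
      intro t k
      rw [hZ]
      simp only
      have hcomm : ∀ j, (∑ r : Fin (WL j), ∑ c : Fin (WL k), L t ⟨j, r⟩ ⟨k, c⟩)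
          = ∑ c : Fin (WL k), ∑ r : Fin (WL j), L t ⟨j, r⟩ ⟨k, c⟩ := fun j => Finset.sum_comm
      calc ∑ j, ∑ r : Fin (WL j), ∑ c : Fin (WL k), L t ⟨j, r⟩ ⟨k, c⟩
          = ∑ j, ∑ c : Fin (WL k), ∑ r : Fin (WL j), L t ⟨j, r⟩ ⟨k, c⟩ :=
            Finset.sum_congr rfl fun j _ => hcomm j
        _ = ∑ c : Fin (WL k), ∑ j, ∑ r : Fin (WL j), L t ⟨j, r⟩ ⟨k, c⟩ := Finset.sum_comm
        _ = ∑ c : Fin (WL k), ∑ p : ι, L t p ⟨k, c⟩ :=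
            Finset.sum_congr rfl fun c _ =>
              (Stmt3Aux.sum_sigma_univ (fun p : ι => L t p ⟨k, c⟩)).symm
        _ ≤ ∑ _c : Fin (WL k), 1 := Finset.sum_le_sum fun c _ => hL3 t ⟨k, c⟩
        _ = WL k := by simp
    -- Step F: assign layers to intermediate switches proportionally to WT
    have hcardS : Fintype.card (Σ i : Fin n, Fin (WT i)) = S := by
      rw [Fintype.card_sigma]
      simp [hS]
    set e : (Σ i : Fin n, Fin (WT i)) ≃ Fin S := Fintype.equivFinOfCardEq hcardS with he
    refine ⟨fun i j k => ∑ q : Fin (WT i), Z (e ⟨i, q⟩) j k, ?_, ?_, ?_⟩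
    · intro i j
      rw [hprop i j, Finset.sum_comm]
      calc ∑ q : Fin (WT i), ∑ k, Z (e ⟨i, q⟩) j k
          ≤ ∑ _q : Fin (WT i), WL j := Finset.sum_le_sum fun q _ => hZrow _ j
        _ = WT i * WL j := by simp [mul_comm]
    · intro i k
      rw [hprop i k, Finset.sum_comm]
      calc ∑ q : Fin (WT i), ∑ j, Z (e ⟨i, q⟩) j k
          ≤ ∑ _q : Fin (WT i), WL k := Finset.sum_le_sum fun q _ => hZcol _ k
        _ = WT i * WL k := by simp [mul_comm]
    · intro j k
      have : ∑ i, ∑ q : Fin (WT i), Z (e ⟨i, q⟩) j k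
          = ∑ p : Σ i : Fin n, Fin (WT i), Z (e p) j k :=
        (Stmt3Aux.sum_sigma_univ (fun p : Σ i : Fin n, Fin (WT i) => Z (e p) j k)).symm
      rw [this, Equiv.sum_comp e (fun t => Z t j k), hZsum j k]
end

section
/- Every finite simple graph G admits an orientation of its edges such that at every vertex the out-degree and the in-degree differ by at most 1. Precisely, there exists a relation R on the vertices of G such that for all vertices u, v: G.Adj u v ↔ (R u v ∨ R v u), never both R u v and R v u, never R v v, and for every vertex v, the number of vertices u with R v u and the number of vertices u with R u v differ by at most 1. -/
/-!
Take a longest trail `p` from `a` to `b`; maximality forces every edge at `a` and at `b` onto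
`p`. Orienting `p` in its direction of travel gives every vertex as many out-arcs as in-arcs,
except that `a` gets one extra out-arc and `b` one extra in-arc (nothing extra if `a = b`).
The edges off `p` are oriented by induction, and `a`, `b` are isolated among them, so every
vertex ends up with out- and in-degree differing by at most one.
-/

theorem List.Nodup.ncard_setOf_mem_left {α β : Type*} [DecidableEq α] {L : List (α × β)}
    (hL : L.Nodup) (a : α) : {b | (a, b) ∈ L}.ncard = (L.map Prod.fst).count a := by
  classical
  have hset : {b | (a, b) ∈ L} = ((L.filter (·.1 = a)).map Prod.snd).toFinset := by
    ext b; simp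
  have hnodup : ((L.filter (·.1 = a)).map Prod.snd).Nodup := by
    refine (hL.filter _).map_on fun x hx y hy hxy => Prod.ext ?_ hxy
    simp only [List.mem_filter, decide_eq_true_eq] at hx hy
    rw [hx.2, hy.2]
  rw [hset, Set.ncard_coe_finset, List.toFinset_card_of_nodup hnodup, List.length_map,
    List.count_eq_countP, List.countP_map, List.countP_eq_length_filter]
  rfl

theorem List.Nodup.ncard_setOf_mem_right {α β : Type*} [DecidableEq β] {L : List (α × β)}
    (hL : L.Nodup) (b : β) : {a | (a, b) ∈ L}.ncard = (L.map Prod.snd).count b := by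
  have := (hL.map Prod.swap_injective).ncard_setOf_mem_left b
  simpa [List.map_map, Function.comp_def] using this

namespace SimpleGraph

variable {V : Type*}

structure IsOrientation (G : SimpleGraph V) (R : V → V → Prop) : Prop where
  adj_iff : ∀ u v, G.Adj u v ↔ R u v ∨ R v u
  asymm : ∀ u v, ¬ (R u v ∧ R v u)

noncomputable def outDeg (R : V → V → Prop) (v : V) : ℕ := {u | R v u}.ncard

noncomputable def inDeg (R : V → V → Prop) (v : V) : ℕ := {u | R u v}.ncard

def IsBalanced (R : V → V → Prop) : Prop :=
  ∀ v, outDeg R v ≤ inDeg R v + 1 ∧ inDeg R v ≤ outDeg R v + 1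

namespace IsOrientation

variable {G H : SimpleGraph V} {R S : V → V → Prop}

theorem adj (hR : G.IsOrientation R) {u v : V} (h : R u v) : G.Adj u v :=
  (hR.adj_iff u v).2 (.inl h)

theorem irrefl (hR : G.IsOrientation R) (v : V) : ¬ R v v := fun h => hR.asymm v v ⟨h, h⟩

theorem sup (hR : G.IsOrientation R) (hS : H.IsOrientation S) (hGH : Disjoint G H) :
    (G ⊔ H).IsOrientation (R ⊔ S) where
  adj_iff u v := by
    simp only [sup_adj, hR.adj_iff, hS.adj_iff, Pi.sup_apply, sup_Prop_eq]
    tauto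
  asymm u v := by
    rintro ⟨h | h, h' | h'⟩
    · exact hR.asymm u v ⟨h, h'⟩
    · exact disjoint_left.1 hGH u v (hR.adj h) (hS.adj h').symm
    · exact disjoint_left.1 hGH v u (hR.adj h') (hS.adj h).symm
    · exact hS.asymm u v ⟨h, h'⟩

theorem outDeg_sup [Finite V] (hR : G.IsOrientation R) (hS : H.IsOrientation S)
    (hGH : Disjoint G H) (v : V) : outDeg (R ⊔ S) v = outDeg R v + outDeg S v :=
  Set.ncard_union_eq (Set.disjoint_left.2 fun u h h' =>
    disjoint_left.1 hGH v u (hR.adj h) (hS.adj h')) (Set.toFinite _) (Set.toFinite _)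

theorem inDeg_sup [Finite V] (hR : G.IsOrientation R) (hS : H.IsOrientation S)
    (hGH : Disjoint G H) (v : V) : inDeg (R ⊔ S) v = inDeg R v + inDeg S v :=
  Set.ncard_union_eq (Set.disjoint_left.2 fun u h h' =>
    disjoint_left.1 hGH u v (hR.adj h) (hS.adj h')) (Set.toFinite _) (Set.toFinite _)

theorem outDeg_eq_zero [Finite V] (hR : G.IsOrientation R) {v : V} (hv : ∀ u, ¬ G.Adj v u) :
    outDeg R v = 0 := by
  simp only [outDeg, Set.ncard_eq_zero (Set.toFinite _), Set.eq_empty_iff_forall_notMem]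
  exact fun u h => hv u (hR.adj h)

theorem inDeg_eq_zero [Finite V] (hR : G.IsOrientation R) {v : V} (hv : ∀ u, ¬ G.Adj v u) :
    inDeg R v = 0 := by
  simp only [inDeg, Set.ncard_eq_zero (Set.toFinite _), Set.eq_empty_iff_forall_notMem]
  exact fun u h => hv u (hR.adj h).symm

end IsOrientation

namespace Walk

variable {G : SimpleGraph V} {a b : V}

def dartRel (p : G.Walk a b) (u v : V) : Prop := (u, v) ∈ p.darts.map (·.toProd)

theorem count_dropLast_support_add_ite [DecidableEq V] (p : G.Walk a b) (v : V) :
    p.support.dropLast.count v + (if b = v then 1 else 0) =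
      p.support.tail.count v + (if a = v then 1 else 0) := by
  have h₁ := congrArg (List.count v) p.dropLast_support_concat
  have h₂ := congrArg (List.count v) p.cons_tail_support
  simp only [List.count_append, List.count_cons, List.count_nil, beq_iff_eq] at h₁ h₂
  omega

theorem IsTrail.nodup_map_toProd_darts {p : G.Walk a b} (hp : p.IsTrail) :
    (p.darts.map (·.toProd)).Nodup :=
  (List.Nodup.of_map _ hp.edges_nodup).map Dart.toProd_injective

theorem IsTrail.outDeg_add_ite [Finite V] [DecidableEq V] {p : G.Walk a b} (hp : p.IsTrail)
    (v : V) : outDeg p.dartRel v + (if b = v then 1 else 0) =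
      inDeg p.dartRel v + (if a = v then 1 else 0) := by
  have hout : outDeg p.dartRel v = _ := hp.nodup_map_toProd_darts.ncard_setOf_mem_left v
  have hin : inDeg p.dartRel v = _ := hp.nodup_map_toProd_darts.ncard_setOf_mem_right v
  rw [hout, hin, List.map_map, List.map_map, Function.comp_def, Function.comp_def,
    p.map_fst_darts, p.map_snd_darts]
  exact p.count_dropLast_support_add_ite v

theorem IsTrail.isOrientation_dartRel {p : G.Walk a b} (hp : p.IsTrail) :
    (fromEdgeSet p.edgeSet).IsOrientation p.dartRel where
  adj_iff u v := by
    simp only [fromEdgeSet_adj, mem_edgeSet, dartRel, edges, List.mem_map]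
    constructor
    · rintro ⟨⟨d, hd, he⟩, -⟩
      exact (dart_edge_eq_mk'_iff.1 he).imp (⟨d, hd, ·⟩) (⟨d, hd, ·⟩)
    · rintro (⟨d, hd, he⟩ | ⟨d, hd, he⟩)
      · exact ⟨⟨d, hd, dart_edge_eq_mk'_iff.2 (.inl he)⟩, (he ▸ d.adj).ne⟩
      · exact ⟨⟨d, hd, dart_edge_eq_mk'_iff.2 (.inr he)⟩, (he ▸ d.adj).ne'⟩
  asymm u v := by
    simp only [dartRel, List.mem_map]
    rintro ⟨⟨d, hd, he⟩, ⟨d', hd', he'⟩⟩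
    have hedge : d.edge = d'.edge := by
      rw [dart_edge_eq_mk'_iff.2 (.inl he), dart_edge_eq_mk'_iff.2 (.inr he')]
    have hdd' : d = d' := List.inj_on_of_nodup_map hp.edges_nodup hd hd' hedge
    subst hdd'
    exact (he ▸ d.adj).ne (Prod.ext_iff.1 (he.symm.trans he')).1

theorem IsTrail.mem_edges_of_adj_of_forall_length_le {p : G.Walk a b} (hp : p.IsTrail)
    (hmax : ∀ (u v : V) (q : G.Walk u v), q.IsTrail → q.length ≤ p.length) {u : V}
    (h : G.Adj a u) : s(a, u) ∈ p.edges := by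
  by_contra hu
  have := hmax _ _ (cons h.symm p) ((isTrail_cons _ _).2 ⟨hp, by rwa [Sym2.eq_swap]⟩)
  simp at this

end Walk

theorem exists_isTrail_forall_adj_mem_edges [Finite V] {G : SimpleGraph V} (hG : G ≠ ⊥) :
    ∃ (a b : V) (p : G.Walk a b), p.IsTrail ∧ p.darts ≠ [] ∧
      (∀ u, G.Adj a u → s(a, u) ∈ p.edges) ∧ ∀ u, G.Adj b u → s(b, u) ∈ p.edges := by
  obtain ⟨x, y, hxy⟩ := ne_bot_iff_exists_adj.1 hG
  have : Nonempty V := ⟨x⟩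
  obtain ⟨a, b, p, hp, hmax⟩ := Walk.exists_isTrail_forall_isTrail_length_le_length G
  have hmax' (u v : V) (q : G.Walk u v) (hq : q.IsTrail) : q.length ≤ p.reverse.length :=
    p.length_reverse ▸ hmax u v q hq
  refine ⟨a, b, p, hp, ?_, fun u => hp.mem_edges_of_adj_of_forall_length_le hmax,
    fun u h => ?_⟩
  · rw [← List.length_pos_iff, Walk.length_darts]
    exact hmax x y (.cons hxy .nil) (by simp)
  · simpa using hp.reverse.mem_edges_of_adj_of_forall_length_le hmax' h

theorem IsBalanced.sup_dartRel [Finite V] {G H : SimpleGraph V} {R : V → V → Prop} {a b : V}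
    (hbal : IsBalanced R) (hR : H.IsOrientation R) {p : G.Walk a b} (hp : p.IsTrail)
    (hHp : Disjoint H (fromEdgeSet p.edgeSet)) (ha : ∀ u, ¬ H.Adj a u) (hb : ∀ u, ¬ H.Adj b u) :
    IsBalanced (R ⊔ p.dartRel) := by
  classical
  intro v
  rw [hR.outDeg_sup hp.isOrientation_dartRel hHp, hR.inDeg_sup hp.isOrientation_dartRel hHp]
  have htrail := hp.outDeg_add_ite v
  have hv := hbal v
  by_cases hend : v = a ∨ v = b
  · have hiso : ∀ u, ¬ H.Adj v u := by rcases hend with rfl | rfl <;> assumption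
    rw [hR.outDeg_eq_zero hiso, hR.inDeg_eq_zero hiso]
    split_ifs at htrail <;> omega
  · rw [not_or] at hend
    rw [if_neg (Ne.symm hend.2), if_neg (Ne.symm hend.1)] at htrail
    omega

theorem exists_isOrientation_isBalanced [Finite V] (G : SimpleGraph V) :
    ∃ R, G.IsOrientation R ∧ IsBalanced R := by
  induction G using WellFoundedLT.induction with
  | _ G ih =>
  rcases eq_or_ne G ⊥ with rfl | hG
  · exact ⟨⊥, ⟨by simp, by simp⟩, by simp [IsBalanced, outDeg, inDeg]⟩
  obtain ⟨a, b, p, hp, hne, ha, hb⟩ := exists_isTrail_forall_adj_mem_edges hG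
  set P := fromEdgeSet p.edgeSet
  have hPG : P ≤ G := fun u v h => p.adj_of_mem_edges h.1
  have hP : P ≠ ⊥ := by
    obtain ⟨d, hd⟩ := List.exists_mem_of_ne_nil _ hne
    exact ne_bot_iff_exists_adj.2 ⟨_, _, hp.isOrientation_dartRel.adj (List.mem_map_of_mem hd)⟩
  have hiso {v : V} (hv : ∀ u, G.Adj v u → s(v, u) ∈ p.edges) (u : V) : ¬ (G \ P).Adj v u :=
    fun h => h.2 ⟨hv u h.1, h.1.ne⟩
  obtain ⟨R, hR, hbal⟩ := ih (G \ P) (sdiff_lt hPG hP)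
  refine ⟨R ⊔ p.dartRel, ?_, hbal.sup_dartRel hR hp disjoint_sdiff_self_left (hiso ha) (hiso hb)⟩
  have hsup := hR.sup hp.isOrientation_dartRel (disjoint_sdiff_self_left (x := P))
  rwa [sdiff_sup_cancel hPG] at hsup

end SimpleGraph

/-- Every finite simple graph admits an orientation of its edges such that at
every vertex the out-degree and the in-degree differ by at most 1. -/
theorem stmt_4 {V : Type*} [Fintype V] (G : SimpleGraph V) :
    ∃ R : V → V → Prop,
      (∀ u v, G.Adj u v ↔ (R u v ∨ R v u)) ∧
      (∀ u v, ¬ (R u v ∧ R v u)) ∧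
      (∀ v, ¬ R v v) ∧
      (∀ v, {u | R v u}.ncard ≤ {u | R u v}.ncard + 1 ∧
            {u | R u v}.ncard ≤ {u | R v u}.ncard + 1) := by
  obtain ⟨R, hR, hbal⟩ := G.exists_isOrientation_isBalanced
  exact ⟨R, hR.adj_iff, hR.asymm, hR.irrefl, hbal⟩
end

section
/- Let D : Fin m → Fin m → ℕ satisfy D j k = D k j and D j j = 0 for all j, k, and let G j k = D j k mod 2. Suppose G' : Fin m → Fin m → ℕ takes values in {0, 1}, satisfies G' j k + G' k j = G j k for all j, k, and satisfies for every j: ⌊(Σ_k G j k)/2⌋ ≤ Σ_k G' j k ≤ ⌈(Σ_k G j k)/2⌉, and for every k: ⌊(Σ_j G j k)/2⌋ ≤ Σ_j G' j k ≤ ⌈(Σ_j G j k)/2⌉. Define D' j k = ⌊D j k / 2⌋ + G' j k. Then D' j k + D' k j = D j k for all j, k, and for every j: ⌊(Σ_k D j k)/2⌋ ≤ Σ_k D' j k ≤ ⌈(Σ_k D j k)/2⌉, and for every k: ⌊(Σ_j D j k)/2⌋ ≤ Σ_j D' j k ≤ ⌈(Σ_j D j k)/2⌉. -/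
/-- If `G'` (with values in {0,1}) splits the parity matrix `G j k = D j k % 2`
of a symmetric zero-diagonal matrix `D` with row/column sums within floor/ceil of half the
corresponding sums of `G`, then `D' j k = ⌊D j k / 2⌋ + G' j k` splits `D` with row/column
sums within floor/ceil of half the corresponding sums of `D`. -/
theorem stmt_5 (m : ℕ) (hm : 0 < m)
    (D : Fin m → Fin m → ℕ)
    (hDsymm : ∀ j k, D j k = D k j)
    (hDdiag : ∀ j, D j j = 0)
    (G' : Fin m → Fin m → ℕ)
    (hG'01 : ∀ j k, G' j k ≤ 1)
    (hG'split : ∀ j k, G' j k + G' k j = D j k % 2)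
    (hG'row : ∀ j, (∑ k, D j k % 2) / 2 ≤ ∑ k, G' j k ∧
                   ∑ k, G' j k ≤ ((∑ k, D j k % 2) + 1) / 2)
    (hG'col : ∀ k, (∑ j, D j k % 2) / 2 ≤ ∑ j, G' j k ∧
                   ∑ j, G' j k ≤ ((∑ j, D j k % 2) + 1) / 2)
    (D' : Fin m → Fin m → ℕ)
    (hD' : ∀ j k, D' j k = D j k / 2 + G' j k) :
    (∀ j k, D' j k + D' k j = D j k) ∧
    (∀ j, (∑ k, D j k) / 2 ≤ ∑ k, D' j k ∧
          ∑ k, D' j k ≤ ((∑ k, D j k) + 1) / 2) ∧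
    (∀ k, (∑ j, D j k) / 2 ≤ ∑ j, D' j k ∧
          ∑ j, D' j k ≤ ((∑ j, D j k) + 1) / 2) := by
  refine ⟨?_, ?_, ?_⟩
  · intro j k
    have h := hG'split j k
    have hs := hDsymm j k
    rw [hD' j k, hD' k j, ← hs]
    omega
  · intro j
    have key : ∑ k, D j k = 2 * (∑ k, D j k / 2) + ∑ k, D j k % 2 := by
      rw [Finset.mul_sum, ← Finset.sum_add_distrib]
      exact Finset.sum_congr rfl fun k _ => by omega
    have hsum : ∑ k, D' j k = (∑ k, D j k / 2) + ∑ k, G' j k := by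
      rw [← Finset.sum_add_distrib]
      exact Finset.sum_congr rfl fun k _ => hD' j k
    have h := hG'row j
    omega
  · intro k
    have key : ∑ j, D j k = 2 * (∑ j, D j k / 2) + ∑ j, D j k % 2 := by
      rw [Finset.mul_sum, ← Finset.sum_add_distrib]
      exact Finset.sum_congr rfl fun j _ => by omega
    have hsum : ∑ j, D' j k = (∑ j, D j k / 2) + ∑ j, G' j k := by
      rw [← Finset.sum_add_distrib]
      exact Finset.sum_congr rfl fun j _ => hD' j k
    have h := hG'col k
    omega
end

section
/- For every matrix D : Fin m → Fin m → ℕ with D j k = D k j and D j j = 0 for all j, k, there exists a matrix D' : Fin m → Fin m → ℕ such that D' j k + D' k j = D j k for all j, k, and for every j: ⌊(Σ_k D j k)/2⌋ ≤ Σ_k D' j k ≤ ⌈(Σ_k D j k)/2⌉, and for every k: ⌊(Σ_j D j k)/2⌋ ≤ Σ_j D' j k ≤ ⌈(Σ_j D j k)/2⌉. (That is, every symmetric demand of a bidirectional Clos network can be split into a directed demand whose every row sum and every column sum is within the floor and ceiling of half the corresponding sum of D.) -/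
/-!
Induct on the number of edges of the multigraph `D`. If every vertex has degree at most one,
any orientation will do. Otherwise some vertex `v` has two incident edges `vu` and `vw`: replace
them by a single edge `uw` (or just delete them when `u = w`), orient the smaller multigraph, and
route the edge `uw` through `v`. This raises the out- and in-degree of `v` by one and changes no
other out-degree minus in-degree. Finally, out- and in-degree differing by at most one means both
lie between `⌊deg / 2⌋` and `⌈deg / 2⌉`.

An orientation of `D` is a matrix `O` with `O + Oᵀ = D`, where `O j k` counts the edges between
`j` and `k` that point from `j` to `k`.
-/

open Finset Matrix

lemma Nat.div_two_le_and_le_of_abs_sub_le_one {a b : ℕ} (h : |(a : ℤ) - b| ≤ 1) :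
    (a + b) / 2 ≤ a ∧ a ≤ (a + b + 1) / 2 := by
  rw [abs_le] at h
  omega

namespace Multigraph

variable {α β : Type*}

lemma exists_add_transpose_eq [LinearOrder α] {D : Matrix α α ℕ} (hD : Dᵀ = D)
    (hdiag : ∀ j, D j j = 0) : ∃ O, O + Oᵀ = D := by
  refine ⟨of fun j k => if j < k then D j k else 0, ?_⟩
  ext j k
  have := congrFun₂ hD j k
  rcases lt_trichotomy j k with h | rfl | h
  · simp [h, not_lt_of_gt h]
  · simp [hdiag]
  · simp_all [not_lt_of_gt h]

section Imbalance

variable [Fintype α]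

def imbalance (O : Matrix α α ℕ) (j : α) : ℤ := (∑ k, O j k : ℕ) - (∑ k, O k j : ℕ)

@[simp]
lemma imbalance_add (O P : Matrix α α ℕ) (j : α) :
    imbalance (O + P) j = imbalance O j + imbalance P j := by
  simp only [imbalance, Matrix.add_apply, sum_add_distrib]
  push_cast
  ring

lemma sum_add_sum_eq_of_add_transpose_eq {O D : Matrix α α ℕ} (hO : O + Oᵀ = D) (j : α) :
    ∑ k, O j k + ∑ k, O k j = ∑ k, D j k := by
  simp [← hO, sum_add_distrib]

lemma abs_imbalance_le {O D : Matrix α α ℕ} (hO : O + Oᵀ = D) (j : α) :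
    |imbalance O j| ≤ ∑ k, D j k := by
  have := sum_add_sum_eq_of_add_transpose_eq hO j
  rw [imbalance, abs_le]
  omega

end Imbalance

variable [DecidableEq α]

def edge (a b : α) : Matrix α α ℕ := single a b 1 + single b a 1

lemma edge_comm (a b : α) : edge a b = edge b a := add_comm _ _

@[simp]
lemma transpose_edge (a b : α) : (edge a b)ᵀ = edge a b := by
  simp [edge, add_comm]

lemma edge_apply_self {a b : α} (hab : a ≠ b) (j : α) : edge a b j j = 0 := by
  simp only [edge, Matrix.add_apply, single_apply]
  grind

lemma exists_eq_add_single {M : Matrix α α ℕ} {a b : α} (h : M a b ≠ 0) :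
    ∃ N, M = N + single a b 1 :=
  ⟨M - single a b 1, by
    ext j k
    simp only [Matrix.add_apply, Matrix.sub_apply, single_apply]
    grind⟩

lemma exists_eq_add_edge {D : Matrix α α ℕ} (hD : Dᵀ = D) {a b : α} (hab : a ≠ b)
    (h : D a b ≠ 0) : ∃ E, Eᵀ = E ∧ D = E + edge a b := by
  obtain ⟨N, rfl⟩ := exists_eq_add_single h
  have hN : N b a ≠ 0 := by
    have := congrFun₂ hD a b
    simp_all [Ne.symm hab]
  obtain ⟨E, rfl⟩ := exists_eq_add_single hN
  have hD' : E + single b a 1 + single a b 1 = E + edge a b := by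
    rw [edge, add_assoc, add_comm (single b a 1)]
  rw [hD'] at hD ⊢
  exact ⟨E, add_right_cancel (b := edge a b) (by simpa using hD), rfl⟩

variable [Fintype α]

lemma sum_single_apply_row [AddCommMonoid β] (a b j : α) (c : β) :
    ∑ k, single a b c j k = if a = j then c else 0 := by
  simp [single_apply, ite_and]

lemma sum_sum_edge (a b : α) : ∑ j, ∑ k, edge a b j k = 2 := by
  simp [edge, sum_add_distrib, sum_single_apply_row]

lemma sum_edge_apply_row (a b j : α) :
    ∑ k, edge a b j k = (if a = j then 1 else 0) + if b = j then 1 else 0 := by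
  simp [edge, sum_add_distrib, sum_single_apply_row]

@[simp]
lemma imbalance_single (a b j : α) :
    imbalance (single a b 1) j = (if a = j then 1 else 0) - if b = j then 1 else 0 := by
  simp [imbalance, single_apply, ite_and]

@[simp]
lemma imbalance_edge (a b j : α) : imbalance (edge a b) j = 0 := by
  simp [edge]

lemma exists_reroute {O E : Matrix α α ℕ} {u w : α} (hO : O + Oᵀ = E + edge u w)
    (huw : O u w ≠ 0) (v : α) :
    ∃ O', O' + O'ᵀ = E + edge u v + edge v w ∧ imbalance O' = imbalance O := by
  obtain ⟨Q, rfl⟩ := exists_eq_add_single huw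
  refine ⟨Q + single u v 1 + single v w 1, ?_, ?_⟩
  · have hQ : Q + Qᵀ = E := by
      refine add_right_cancel (b := edge u w) ?_
      rw [← hO]
      simp only [transpose_add, transpose_single, edge]
      abel
    simp only [← hQ, transpose_add, transpose_single, edge]
    abel
  · ext j
    simp only [imbalance_add, imbalance_single]
    ring

theorem exists_add_transpose_eq_abs_imbalance_le_one [LinearOrder α] (D : Matrix α α ℕ)
    (hD : Dᵀ = D) (hdiag : ∀ j, D j j = 0) :
    ∃ O, O + Oᵀ = D ∧ ∀ j, |imbalance O j| ≤ 1 := by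
  by_cases hdeg : ∀ j, ∑ k, D j k ≤ 1
  · obtain ⟨O, hO⟩ := exists_add_transpose_eq hD hdiag
    exact ⟨O, hO, fun j => (abs_imbalance_le hO j).trans (by exact_mod_cast hdeg j)⟩
  obtain ⟨v, hv⟩ : ∃ v, 1 < ∑ k, D v k := by simpa using hdeg
  obtain ⟨u, -, hu⟩ := exists_ne_zero_of_sum_ne_zero (by omega : ∑ k, D v k ≠ 0)
  have hvu : v ≠ u := by rintro rfl; exact hu (hdiag v)
  obtain ⟨E₁, hE₁, rfl⟩ := exists_eq_add_edge hD hvu hu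
  have hE₁diag : ∀ j, E₁ j j = 0 := fun j => (Nat.add_eq_zero_iff.1 (hdiag j)).1
  have hE₁v : ∑ k, E₁ v k ≠ 0 := by
    simp only [Matrix.add_apply, sum_add_distrib, sum_edge_apply_row, if_pos, hvu.symm,
      if_false] at hv
    omega
  obtain ⟨w, -, hw⟩ := exists_ne_zero_of_sum_ne_zero hE₁v
  have hvw : v ≠ w := by rintro rfl; exact hw (hE₁diag v)
  obtain ⟨E, hE, rfl⟩ := exists_eq_add_edge hE₁ hvw hw
  have hEdiag : ∀ j, E j j = 0 := fun j => (Nat.add_eq_zero_iff.1 (hE₁diag j)).1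
  rcases eq_or_ne u w with rfl | huw
  · obtain ⟨O, hO, hbal⟩ := exists_add_transpose_eq_abs_imbalance_le_one E hE hEdiag
    refine ⟨O + edge v u, ?_, by simpa using hbal⟩
    rw [transpose_add, transpose_edge, ← hO]
    abel
  · obtain ⟨O, hO, hbal⟩ := exists_add_transpose_eq_abs_imbalance_le_one (E + edge u w)
      (by rw [transpose_add, hE, transpose_edge])
      (fun j => by rw [Matrix.add_apply, hEdiag, edge_apply_self huw])
    have huw' : O u w ≠ 0 ∨ O w u ≠ 0 := by
      have := congrFun₂ hO u w
      simp only [Matrix.add_apply, transpose_apply, edge, single_apply_same] at this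
      omega
    rcases huw' with h | h
    · obtain ⟨O', hO', hbal'⟩ := exists_reroute hO h v
      refine ⟨O', ?_, hbal' ▸ hbal⟩
      rw [hO', edge_comm u v]
      abel
    · obtain ⟨O', hO', hbal'⟩ := exists_reroute (edge_comm u w ▸ hO) h v
      refine ⟨O', ?_, hbal' ▸ hbal⟩
      rw [hO', edge_comm w v]
termination_by ∑ j, ∑ k, D j k
decreasing_by
  all_goals subst_vars; simp only [Matrix.add_apply, sum_add_distrib, sum_sum_edge]; omega

end Multigraph

open Multigraph

theorem stmt_6_general (m : ℕ)
    (D : Fin m → Fin m → ℕ)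
    (hDsymm : ∀ j k, D j k = D k j)
    (hDdiag : ∀ j, D j j = 0) :
    ∃ D' : Fin m → Fin m → ℕ,
      (∀ j k, D' j k + D' k j = D j k) ∧
      (∀ j, (∑ k, D j k) / 2 ≤ ∑ k, D' j k ∧
            ∑ k, D' j k ≤ ((∑ k, D j k) + 1) / 2) ∧
      (∀ k, (∑ j, D j k) / 2 ≤ ∑ j, D' j k ∧
            ∑ j, D' j k ≤ ((∑ j, D j k) + 1) / 2) := by
  obtain ⟨O, hO, hbal⟩ := exists_add_transpose_eq_abs_imbalance_le_one
    (D : Matrix (Fin m) (Fin m) ℕ) (funext₂ fun j k => hDsymm k j) hDdiag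
  refine ⟨O, fun j k => congrFun₂ hO j k, fun j => ?_, fun k => ?_⟩
  · rw [← sum_add_sum_eq_of_add_transpose_eq hO j]
    exact Nat.div_two_le_and_le_of_abs_sub_le_one (hbal j)
  · have hcol : ∑ j, D j k = ∑ j, O j k + ∑ j, O k j := by
      rw [add_comm, sum_add_sum_eq_of_add_transpose_eq hO k]
      exact sum_congr rfl fun j _ => hDsymm j k
    rw [hcol]
    exact Nat.div_two_le_and_le_of_abs_sub_le_one (by
      simpa only [imbalance, abs_sub_comm] using hbal k)

/-- Every symmetric demand of a bidirectional Clos network can be split into a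
directed demand whose every row sum and every column sum is within the floor and ceiling of
half the corresponding sum of `D`. -/
theorem stmt_6 (m : ℕ) (hm : 0 < m)
    (D : Fin m → Fin m → ℕ)
    (hDsymm : ∀ j k, D j k = D k j)
    (hDdiag : ∀ j, D j j = 0) :
    ∃ D' : Fin m → Fin m → ℕ,
      (∀ j k, D' j k + D' k j = D j k) ∧
      (∀ j, (∑ k, D j k) / 2 ≤ ∑ k, D' j k ∧
            ∑ k, D' j k ≤ ((∑ k, D j k) + 1) / 2) ∧
      (∀ k, (∑ j, D j k) / 2 ≤ ∑ j, D' j k ∧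
            ∑ j, D' j k ≤ ((∑ j, D j k) + 1) / 2) :=
  stmt_6_general m D hDsymm hDdiag
end

section
/- Let Y : Fin n → Fin m → Fin m → ℤ be a routing scheme (with Y i j k = Y i k j), let l ∈ ℕ, and let i : Fin (l+1) → Fin n, j : Fin (l+1) → Fin m, k : Fin (l+1) → Fin m be sequences with j t ≠ k t for every t. Define Y' from Y by applying the replacement chain: for each t < l, subtract 1 from Y at positions (i t, j (t+1), k (t+1)) and (i t, k (t+1), j (t+1)) and add 1 at positions (i t, j t, k t) and (i t, k t, j t); finally add 1 at positions (i l, j l, k l) and (i l, k l, j l). Then for all (a, b): Σ_s Y' s a b = Σ_s Y s a b + (1 if (a, b) = (j 0, k 0)) + (1 if (a, b) = (k 0, j 0)). That is, applying a replacement chain increases the connection count E(Y) exactly at the pair (j_0, k_0) by 1 and leaves all other pairs' connection counts unchanged. -/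
lemma stmt_7_tel (l : ℕ) (F : Fin (l + 1) → ℤ) :
    ∑ t : Fin l, (F t.castSucc - F t.succ) = F 0 - F (Fin.last l) := by
  induction l with
  | zero => simp
  | succ l ih =>
    rw [Fin.sum_univ_castSucc]
    have := ih (fun t => F t.castSucc)
    simp only [Fin.succ_castSucc] at this ⊢
    rw [this]
    simp [Fin.succ_last]

/-- Applying a replacement chain of length `l` to a routing scheme increases
the connection count `E(Y)` exactly at the pair `(j 0, k 0)` (and symmetrically
`(k 0, j 0)`) by 1 and leaves all other pairs' connection counts unchanged. -/
theorem stmt_7 (m n l : ℕ)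
    (Y : Fin n → Fin m → Fin m → ℤ)
    (hYsymm : ∀ i j k, Y i j k = Y i k j)
    (i : Fin (l + 1) → Fin n) (j k : Fin (l + 1) → Fin m)
    (hjk : ∀ t, j t ≠ k t)
    (Y' : Fin n → Fin m → Fin m → ℤ)
    (hY' : ∀ s a b, Y' s a b = Y s a b
      + (∑ t : Fin l,
          ((if s = i t.castSucc ∧ a = j t.castSucc ∧ b = k t.castSucc then 1 else 0)
          + (if s = i t.castSucc ∧ a = k t.castSucc ∧ b = j t.castSucc then 1 else 0)
          - (if s = i t.castSucc ∧ a = j t.succ ∧ b = k t.succ then 1 else 0)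
          - (if s = i t.castSucc ∧ a = k t.succ ∧ b = j t.succ then 1 else 0)))
      + (if s = i (Fin.last l) ∧ a = j (Fin.last l) ∧ b = k (Fin.last l) then 1 else 0)
      + (if s = i (Fin.last l) ∧ a = k (Fin.last l) ∧ b = j (Fin.last l) then 1 else 0)) :
    ∀ a b, ∑ s, Y' s a b = ∑ s, Y s a b
      + (if a = j 0 ∧ b = k 0 then 1 else 0)
      + (if a = k 0 ∧ b = j 0 then 1 else 0) := by
  intro a b
  have key : ∀ (i0 : Fin n) (P : Prop) [Decidable P],
      (∑ s : Fin n, if s = i0 ∧ P then (1 : ℤ) else 0) = if P then 1 else 0 := by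
    intro i0 P _
    by_cases hP : P <;> simp [hP]
  set F : Fin (l + 1) → ℤ := fun t =>
    (if a = j t ∧ b = k t then (1 : ℤ) else 0) + (if a = k t ∧ b = j t then (1 : ℤ) else 0)
    with hF
  have hmid : ∀ t : Fin l,
      (∑ s : Fin n,
          ((if s = i t.castSucc ∧ a = j t.castSucc ∧ b = k t.castSucc then (1:ℤ) else 0)
          + (if s = i t.castSucc ∧ a = k t.castSucc ∧ b = j t.castSucc then 1 else 0)
          - (if s = i t.castSucc ∧ a = j t.succ ∧ b = k t.succ then 1 else 0)
          - (if s = i t.castSucc ∧ a = k t.succ ∧ b = j t.succ then 1 else 0)))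
        = F t.castSucc - F t.succ := by
    intro t
    simp only [sub_eq_add_neg, Finset.sum_add_distrib, Finset.sum_neg_distrib, key, hF]
    ring
  calc ∑ s, Y' s a b
      = ∑ s, Y s a b
        + (∑ t : Fin l, (F t.castSucc - F t.succ))
        + F (Fin.last l) := by
        simp only [hY', Finset.sum_add_distrib, key]
        rw [Finset.sum_comm]
        simp only [hmid, hF]
        ring
    _ = ∑ s, Y s a b + (if a = j 0 ∧ b = k 0 then 1 else 0)
          + (if a = k 0 ∧ b = j 0 then 1 else 0) := by
        rw [stmt_7_tel l F]
        simp only [hF]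
        ring
end
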